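/- arXiv:2211.15611 — 5 statements merged into one kernel-verified Lean document; each statement's English description precedes it below -/
import Mathlib

section
/- Let (G,(A_e)_{e∈E}) be an edge-uncertainty graph with true weights w_e ∈ A_e whose underlying graph G is a single cycle C. For Q ⊆ E, let A'_e := {w_e} if e ∈ Q and A'_e := A_e otherwise. Then Q is a feasible query set if and only if there exists an edge f of C that is always maximal in C with respect to the uncertainty sets (A'_e), i.e. inf A'_f ≥ sup A'_e for all e ∈ C − f; in that case Q verifies the spanning tree C − f. -/
open scoped Classical

variable {V : Type*}

def IsSpanningTree (G T : SimpleGraph V) : Prop := T ≤ G ∧ T.IsTree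

noncomputable def treeWeight (T : SimpleGraph V) (w : Sym2 V → ℝ) : ℝ :=
  ∑ᶠ e ∈ T.edgeSet, w e

def IsMST (G : SimpleGraph V) (w : Sym2 V → ℝ) (T : SimpleGraph V) : Prop :=
  IsSpanningTree G T ∧
    ∀ T' : SimpleGraph V, IsSpanningTree G T' → treeWeight T w ≤ treeWeight T' w

def IsUncertaintySet (S : Set ℝ) : Prop :=
  S.Nonempty ∧ BddBelow S ∧ BddAbove S ∧
    ((∃ x, S = {x}) ∨ (sInf S ∉ S ∧ sSup S ∉ S))

def IsUncertaintyGraph (G : SimpleGraph V) (A : Sym2 V → Set ℝ) : Prop :=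
  G.Connected ∧ ∀ e ∈ G.edgeSet, IsUncertaintySet (A e)

def Admissible (G : SimpleGraph V) (A : Sym2 V → Set ℝ) (w : Sym2 V → ℝ)
    (Q : Set (Sym2 V)) (w' : Sym2 V → ℝ) : Prop :=
  (∀ e ∈ Q, w' e = w e) ∧ ∀ e ∈ G.edgeSet, e ∉ Q → w' e ∈ A e

def Verifies (G : SimpleGraph V) (A : Sym2 V → Set ℝ) (w : Sym2 V → ℝ)
    (Q : Set (Sym2 V)) (T : SimpleGraph V) : Prop :=
  ∀ w' : Sym2 V → ℝ, Admissible G A w Q w' → IsMST G w' T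

def FeasibleQuerySet (G : SimpleGraph V) (A : Sym2 V → Set ℝ) (w : Sym2 V → ℝ)
    (Q : Set (Sym2 V)) : Prop :=
  ∃ T : SimpleGraph V, Verifies G A w Q T

/-- `G` is a single (simple) cycle: there is a cycle walk visiting every vertex whose
edges are exactly the edges of `G`. -/
def IsCycleGraph (G : SimpleGraph V) : Prop :=
  ∃ (v : V) (c : G.Walk v v), c.IsCycle ∧ (∀ u : V, u ∈ c.support) ∧
    ∀ e : Sym2 V, e ∈ G.edgeSet ↔ e ∈ c.edges

namespace Stmt7Aux

open SimpleGraph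

/-- A connected graph on a finite vertex type has at least `card V - 1` edges. -/
lemma card_le_of_connected [Fintype V] {H : SimpleGraph V} (h : H.Connected) :
    Fintype.card V ≤ H.edgeFinset.card + 1 := by
  classical
  obtain ⟨r⟩ := h.nonempty
  have key : ∀ v : V, v ≠ r → ∃ x : V, H.Adj v x ∧ H.dist x r < H.dist v r := by
    intro v hv
    obtain ⟨p, hp⟩ := h.exists_walk_length_eq_dist v r
    cases p with
    | nil => exact absurd rfl hv
    | @cons _ x _ hadj q =>
      refine ⟨x, hadj, ?_⟩
      have h1 := SimpleGraph.dist_le q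
      simp only [SimpleGraph.Walk.length_cons] at hp
      omega
  choose nb hadj hlt using key
  set g : V → Sym2 V := fun v => if hv : v = r then s(r, r) else s(v, nb v hv) with hg
  have hmaps : ∀ a ∈ Finset.univ.erase r, g a ∈ H.edgeFinset := by
    intro a ha
    have ha' : a ≠ r := (Finset.mem_erase.mp ha).1
    simp only [hg, dif_neg ha', SimpleGraph.mem_edgeFinset, SimpleGraph.mem_edgeSet]
    exact hadj a ha'
  have hinj : Set.InjOn g (Finset.univ.erase r) := by
    intro a ha b hb hab
    have ha' : a ≠ r := (Finset.mem_erase.mp ha).1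
    have hb' : b ≠ r := (Finset.mem_erase.mp hb).1
    simp only [hg, dif_neg ha', dif_neg hb', Sym2.eq_iff] at hab
    rcases hab with ⟨h1, _⟩ | ⟨h1, h2⟩
    · exact h1
    · exfalso
      have l1 := hlt a ha'
      have l2 := hlt b hb'
      rw [h2] at l1
      rw [← h1] at l2
      omega
  have hcard := Finset.card_le_card_of_injOn g hmaps hinj
  have h1 : (Finset.univ.erase r).card = Fintype.card V - 1 := by
    rw [Finset.card_erase_of_mem (Finset.mem_univ r), Finset.card_univ]
  have h3 : 0 < Fintype.card V := Fintype.card_pos_iff.mpr ⟨r⟩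
  omega

/-- Deleting a non-bridge edge keeps the graph connected. -/
lemma connected_deleteEdges {H : SimpleGraph V} {x y : V} (hH : H.Connected)
    (hr : (H.deleteEdges {s(x, y)}).Reachable x y) :
    (H.deleteEdges {s(x, y)}).Connected := by
  haveI : Nonempty V := hH.nonempty
  refine SimpleGraph.Connected.mk ?_
  intro u v
  obtain ⟨p⟩ := hH.preconnected u v
  induction p with
  | nil => exact SimpleGraph.Reachable.refl _
  | @cons a b c hadj q ih =>
    refine SimpleGraph.Reachable.trans ?_ ih
    by_cases he : s(a, b) = s(x, y)
    · rw [Sym2.eq_iff] at he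
      rcases he with ⟨rfl, rfl⟩ | ⟨rfl, rfl⟩
      · exact hr
      · exact hr.symm
    · exact SimpleGraph.Adj.reachable (by simp [SimpleGraph.deleteEdges_adj, hadj, he])

/-- Deleting an edge lying on a cycle keeps the graph connected. -/
lemma connected_deleteEdges' {H : SimpleGraph V} {e : Sym2 V} (hH : H.Connected)
    (hcy : ∃ (u : V) (p : H.Walk u u), p.IsCycle ∧ e ∈ p.edges) :
    (H.deleteEdges {e}).Connected := by
  induction e using Sym2.ind with
  | _ x y =>
    have h := (SimpleGraph.adj_and_reachable_delete_edges_iff_exists_cycle (v := x) (w := y)).2 hcy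
    exact connected_deleteEdges hH h.2

end Stmt7Aux

/-- Let the underlying graph of an edge-uncertainty instance be a single
cycle `C`, and for `Q ⊆ E` let `A' e = {w e}` for `e ∈ Q` and `A' e = A e` otherwise.
Then `Q` is a feasible query set iff some edge `f` of `C` is always maximal in `C` with
respect to `(A' e)`, and in that case `Q` verifies the spanning tree `C − f`. -/
theorem stmt7 {V : Type*} [Fintype V] (G : SimpleGraph V) (A : Sym2 V → Set ℝ)
    (w : Sym2 V → ℝ)
    (hUG : IsUncertaintyGraph G A)
    (hw : ∀ e ∈ G.edgeSet, w e ∈ A e)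
    (hcyc : IsCycleGraph G)
    (Q : Set (Sym2 V)) (hQE : Q ⊆ G.edgeSet)
    (A' : Sym2 V → Set ℝ) (hA' : A' = fun e => if e ∈ Q then {w e} else A e) :
    (FeasibleQuerySet G A w Q ↔
      ∃ f ∈ G.edgeSet, ∀ e ∈ G.edgeSet, e ≠ f → sSup (A' e) ≤ sInf (A' f)) ∧
    ∀ f ∈ G.edgeSet, (∀ e ∈ G.edgeSet, e ≠ f → sSup (A' e) ≤ sInf (A' f)) →
      Verifies G A w Q (G.deleteEdges {f}) := by
  classical
  obtain ⟨v0, c, hc, hsup, hedge⟩ := hcyc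
  have hconn : G.Connected := hUG.1
  -- every vertex lies on the tail of the support of `c`
  have htail : ∀ u : V, u ∈ c.support.tail := by
    intro u
    by_cases huv : u = v0
    · subst huv
      have h1 : u ∈ c.tail.support := c.tail.end_mem_support
      rwa [SimpleGraph.Walk.support_tail_of_not_nil c hc.not_nil] at h1
    · have h1 := hsup u
      rw [SimpleGraph.Walk.support_eq_cons] at h1
      rcases List.mem_cons.mp h1 with h | h
      · exact absurd h huv
      · exact h
  have hnodup : c.support.tail.Nodup := hc.support_nodup
  have hlenV : c.support.tail.length = Fintype.card V := by
    have h1 : c.support.tail.toFinset = Finset.univ := by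
      ext u; simp [htail u]
    have h2 := List.toFinset_card_of_nodup hnodup
    rw [h1, Finset.card_univ] at h2
    omega
  have hlenc : c.length = Fintype.card V := by
    have h1 := SimpleGraph.Walk.length_support c
    have h2 := congrArg List.length (SimpleGraph.Walk.support_eq_cons c)
    simp only [List.length_cons] at h2
    omega
  have hcardG : G.edgeFinset.card = Fintype.card V := by
    have hE : G.edgeFinset = c.edges.toFinset := by
      ext e; simp [SimpleGraph.mem_edgeFinset, hedge]
    rw [hE, List.toFinset_card_of_nodup hc.isCircuit.isTrail.edges_nodup,
      SimpleGraph.Walk.length_edges, hlenc]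
  have hn3 : 3 ≤ Fintype.card V := by
    have := hc.three_le_length; omega
  -- deleting any edge gives a connected graph
  have hconn' : ∀ f ∈ G.edgeSet, (G.deleteEdges {f}).Connected := by
    intro f hf
    exact Stmt7Aux.connected_deleteEdges' hconn ⟨v0, c, hc, (hedge f).1 hf⟩
  -- deleting any edge gives a spanning tree
  have hspan : ∀ f ∈ G.edgeSet, IsSpanningTree G (G.deleteEdges {f}) := by
    intro f hf
    refine ⟨SimpleGraph.deleteEdges_le _, hconn' f hf, ?_⟩
    intro u c' hc'
    have hlen3 := hc'.three_le_length
    have hne : c'.edges ≠ [] := by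
      intro h
      have h2 := SimpleGraph.Walk.length_edges c'
      rw [h] at h2
      simp at h2
      omega
    obtain ⟨g, hg⟩ := List.exists_mem_of_ne_nil _ hne
    have hgE : g ∈ (G.deleteEdges {f}).edgeSet := c'.edges_subset_edgeSet hg
    have hG'' := Stmt7Aux.connected_deleteEdges' (hconn' f hf) ⟨u, c', hc', hg⟩
    have hgG : g ∈ G.edgeSet ∧ g ≠ f := by
      rw [SimpleGraph.edgeSet_deleteEdges] at hgE
      simpa using hgE
    have hfeq : ((G.deleteEdges {f}).deleteEdges {g}).edgeFinset
        = (G.edgeFinset.erase f).erase g := by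
      ext e
      simp only [SimpleGraph.mem_edgeFinset, SimpleGraph.edgeSet_deleteEdges,
        Finset.mem_erase, Set.mem_diff, Set.mem_singleton_iff]
      tauto
    have hcard'' := Stmt7Aux.card_le_of_connected hG''
    replace hcard'' : Fintype.card V ≤ ((G.edgeFinset.erase f).erase g).card + 1 := by
      convert hcard'' using 3; convert hfeq.symm
    have hfF : f ∈ G.edgeFinset := (SimpleGraph.mem_edgeFinset).2 hf
    have hgF : g ∈ G.edgeFinset.erase f :=
      Finset.mem_erase.2 ⟨hgG.2, (SimpleGraph.mem_edgeFinset).2 hgG.1⟩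
    rw [Finset.card_erase_of_mem hgF, Finset.card_erase_of_mem hfF, hcardG] at hcard''
    omega
  -- every spanning tree is the cycle minus one edge
  have hclass : ∀ T : SimpleGraph V, IsSpanningTree G T →
      ∃ f ∈ G.edgeSet, T = G.deleteEdges {f} := by
    intro T hT
    have hsub : T.edgeFinset ⊆ G.edgeFinset := by
      intro e he
      rw [SimpleGraph.mem_edgeFinset] at he ⊢
      exact SimpleGraph.edgeSet_mono hT.1 he
    have hcardT := hT.2.card_edgeFinset
    have hdiff : (G.edgeFinset \ T.edgeFinset).Nonempty := by
      rw [← Finset.card_pos, Finset.card_sdiff_of_subset hsub]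
      omega
    obtain ⟨f, hfmem⟩ := hdiff
    rw [Finset.mem_sdiff] at hfmem
    have hfe : f ∈ G.edgeSet := (SimpleGraph.mem_edgeFinset).1 hfmem.1
    refine ⟨f, hfe, ?_⟩
    have hsub2 : T.edgeFinset ⊆ G.edgeFinset.erase f := fun e he =>
      Finset.mem_erase.2 ⟨fun h => hfmem.2 (h ▸ he), hsub he⟩
    have heq : T.edgeFinset = G.edgeFinset.erase f :=
      Finset.eq_of_subset_of_card_le hsub2
        (by rw [Finset.card_erase_of_mem hfmem.1]; omega)
    apply SimpleGraph.edgeSet_inj.mp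
    ext e
    have h1 := Finset.ext_iff.mp heq e
    simp only [SimpleGraph.mem_edgeFinset, Finset.mem_erase] at h1
    rw [SimpleGraph.edgeSet_deleteEdges, h1]
    simp [and_comm]
  -- weight of the cycle minus an edge
  have hwt : ∀ f ∈ G.edgeSet, ∀ w' : Sym2 V → ℝ,
      treeWeight (G.deleteEdges {f}) w' = (∑ e ∈ G.edgeFinset, w' e) - w' f := by
    intro f hf w'
    have h1 : (G.deleteEdges {f}).edgeSet = ↑(G.edgeFinset.erase f) := by
      ext e
      simp only [SimpleGraph.edgeSet_deleteEdges, Finset.coe_erase, Set.mem_diff,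
        Set.mem_singleton_iff, SimpleGraph.coe_edgeFinset]
    unfold treeWeight
    rw [h1, finsum_mem_coe_finset]
    have h2 := Finset.sum_erase_add G.edgeFinset w' ((SimpleGraph.mem_edgeFinset).2 hf)
    linarith
  -- a maximal-weight edge gives an MST
  have hMST : ∀ f ∈ G.edgeSet, ∀ w' : Sym2 V → ℝ,
      (∀ e ∈ G.edgeSet, w' e ≤ w' f) → IsMST G w' (G.deleteEdges {f}) := by
    intro f hf w' hle
    refine ⟨hspan f hf, ?_⟩
    intro T' hT'
    obtain ⟨g, hg, rfl⟩ := hclass T' hT'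
    rw [hwt f hf w', hwt g hg w']
    have := hle g hg
    linarith
  -- basic facts about A'
  have hmemA' : ∀ e ∈ G.edgeSet, (A' e).Nonempty ∧ BddBelow (A' e) ∧ BddAbove (A' e) := by
    intro e he
    rw [hA']
    by_cases heQ : e ∈ Q
    · simp only [heQ, if_pos]
      exact ⟨⟨w e, rfl⟩, bddBelow_singleton, bddAbove_singleton⟩
    · simp only [heQ, if_neg, if_false]
      obtain ⟨h1, h2, h3, _⟩ := hUG.2 e he
      exact ⟨h1, h2, h3⟩
  have hwA' : ∀ w' : Sym2 V → ℝ, Admissible G A w Q w' →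
      ∀ e ∈ G.edgeSet, w' e ∈ A' e := by
    intro w' hw' e he
    rw [hA']
    by_cases heQ : e ∈ Q
    · simp only [heQ, if_pos]
      exact hw'.1 e heQ
    · simp only [heQ, if_neg, if_false]
      exact hw'.2 e he heQ
  -- part 2
  have part2 : ∀ f ∈ G.edgeSet, (∀ e ∈ G.edgeSet, e ≠ f → sSup (A' e) ≤ sInf (A' f)) →
      Verifies G A w Q (G.deleteEdges {f}) := by
    intro f hf hmax w' hw'
    apply hMST f hf
    intro e he
    by_cases hef : e = f
    · subst hef; exact le_refl _
    · have h1 : w' e ≤ sSup (A' e) := le_csSup (hmemA' e he).2.2 (hwA' w' hw' e he)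
      have h2 : sInf (A' f) ≤ w' f := csInf_le (hmemA' f hf).2.1 (hwA' w' hw' f hf)
      have h3 := hmax e he hef
      linarith
  refine ⟨⟨?_, ?_⟩, part2⟩
  · rintro ⟨T, hT⟩
    have hadm_w : Admissible G A w Q w := ⟨fun e _ => rfl, fun e he _ => hw e he⟩
    obtain ⟨f, hf, rfl⟩ := hclass T (hT w hadm_w).1
    refine ⟨f, hf, ?_⟩
    by_contra hcon
    push_neg at hcon
    obtain ⟨e, he, hef, hlt⟩ := hcon
    obtain ⟨a, haf, halt⟩ := exists_lt_of_csInf_lt (hmemA' f hf).1 hlt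
    obtain ⟨b, hbe, hab⟩ := exists_lt_of_lt_csSup (hmemA' e he).1 halt
    set w'' : Sym2 V → ℝ := fun x => if x = e then b else if x = f then a else w x with hw''
    have hbmem : b ∈ if e ∈ Q then ({w e} : Set ℝ) else A e := by rw [hA'] at hbe; exact hbe
    have hamem : a ∈ if f ∈ Q then ({w f} : Set ℝ) else A f := by rw [hA'] at haf; exact haf
    have hadm : Admissible G A w Q w'' := by
      constructor
      · intro x hx
        by_cases hxe : x = e
        · subst hxe
          rw [if_pos hx] at hbmem
          simp only [hw'', if_pos rfl]
          exact hbmem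
        · by_cases hxf : x = f
          · subst hxf
            rw [if_pos hx] at hamem
            simp only [hw'', if_neg hxe, if_pos rfl]
            exact hamem
          · simp [hw'', hxe, hxf]
      · intro x hxE hxQ
        by_cases hxe : x = e
        · subst hxe
          rw [if_neg hxQ] at hbmem
          simpa [hw''] using hbmem
        · by_cases hxf : x = f
          · subst hxf
            rw [if_neg hxQ] at hamem
            simpa [hw'', hxe] using hamem
          · simpa [hw'', hxe, hxf] using hw x hxE
    have hM := hT w'' hadm
    have hcmp := hM.2 (G.deleteEdges {e}) (hspan e he)
    rw [hwt f hf w'', hwt e he w''] at hcmp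
    have hbv : w'' e = b := by simp [hw'']
    have hav : w'' f = a := by simp [hw'', Ne.symm hef]
    rw [hbv, hav] at hcmp
    linarith
  · rintro ⟨f, hf, hmax⟩
    exact ⟨_, part2 f hf hmax⟩
end

section
/- Let (G,(A_e)_{e∈E}) be an edge-uncertainty graph with true weights w_e ∈ A_e whose underlying graph G is a cactus graph. For Q ⊆ E, let A'_e := {w_e} if e ∈ Q and A'_e := A_e otherwise. Then Q is a feasible query set if and only if for every cycle C of G there exists an edge f of C that is always maximal in C with respect to the uncertainty sets (A'_e), i.e. inf A'_f ≥ sup A'_e for all e ∈ C − f. -/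
open scoped Classical

variable {V : Type*}

/-- `G` is a cactus graph: it is connected and every edge lies on at most one simple
cycle, i.e. any two simple cycles sharing an edge have the same edge set. -/
def IsCactus (G : SimpleGraph V) : Prop :=
  G.Connected ∧ ∀ (u v : V) (c₁ : G.Walk u u) (c₂ : G.Walk v v),
    c₁.IsCycle → c₂.IsCycle → (∃ e : Sym2 V, e ∈ c₁.edges ∧ e ∈ c₂.edges) →
      ∀ e : Sym2 V, e ∈ c₁.edges ↔ e ∈ c₂.edges

namespace Stmt8Aux

open SimpleGraph

variable {V : Type*}

/-- The collection of edge sets of simple cycles of `G`. -/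
def cycClasses (G : SimpleGraph V) : Set (Set (Sym2 V)) :=
  {s | ∃ (v : V) (c : G.Walk v v), c.IsCycle ∧ s = {e | e ∈ c.edges}}

lemma classes_subset_edgeSet {G : SimpleGraph V} {s : Set (Sym2 V)}
    (hs : s ∈ cycClasses G) : s ⊆ G.edgeSet := by
  obtain ⟨v, c, hc, rfl⟩ := hs
  exact fun e he => c.edges_subset_edgeSet he

lemma classes_disjoint {G : SimpleGraph V} (hcac : _root_.IsCactus G)
    {s t : Set (Sym2 V)} (hs : s ∈ cycClasses G) (ht : t ∈ cycClasses G)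
    {e : Sym2 V} (hes : e ∈ s) (het : e ∈ t) : s = t := by
  obtain ⟨v, c, hc, rfl⟩ := hs
  obtain ⟨v', c', hc', rfl⟩ := ht
  exact Set.ext fun g => hcac.2 v v' c c' hc hc' ⟨e, hes, het⟩ g

lemma sel_injOn {G : SimpleGraph V} (hcac : _root_.IsCactus G)
    {sel : Set (Sym2 V) → Sym2 V} (hsel : ∀ s ∈ cycClasses G, sel s ∈ s) :
    Set.InjOn sel (cycClasses G) := fun s hs t ht hst =>
  classes_disjoint hcac hs ht (hsel s hs) (hst ▸ hsel t ht)

lemma exists_walk_avoiding {G : SimpleGraph V} {a u v : V} {c : G.Walk a a}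
    (hc : c.IsCycle) (he : s(u, v) ∈ c.edges) :
    ∃ W : G.Walk u v, s(u, v) ∉ W.edges ∧ ∀ e ∈ W.edges, e ∈ c.edges := by
  have hu : u ∈ c.support := c.fst_mem_support_of_mem_edges he
  have hrot : (c.rotate u hu).edges ~r c.edges := c.rotate_edges u hu
  have hperm : List.Perm (c.rotate u hu).edges c.edges := hrot.perm
  have he' : s(u, v) ∈ (c.rotate u hu).edges := hperm.mem_iff.mpr he
  have hv : v ∈ (c.rotate u hu).support := (c.rotate u hu).snd_mem_support_of_mem_edges he'
  have hspec := (c.rotate u hu).take_spec hv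
  have hnodup : (c.rotate u hu).edges.Nodup := (hc.rotate hu).edges_nodup
  have hedges : (c.rotate u hu).edges =
      ((c.rotate u hu).takeUntil v hv).edges ++ ((c.rotate u hu).dropUntil v hv).edges := by
    rw [← SimpleGraph.Walk.edges_append, hspec]
  rw [hedges] at hnodup
  have hdisj := (List.nodup_append.mp hnodup).2.2
  by_cases h1 : s(u, v) ∈ ((c.rotate u hu).takeUntil v hv).edges
  · refine ⟨((c.rotate u hu).dropUntil v hv).reverse, ?_, ?_⟩
    · rw [SimpleGraph.Walk.edges_reverse, List.mem_reverse]
      exact fun hmem => hdisj _ h1 _ hmem rfl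
    · intro e hemem
      rw [SimpleGraph.Walk.edges_reverse, List.mem_reverse] at hemem
      exact hperm.subset (hedges ▸ List.mem_append_right _ hemem)
  · exact ⟨(c.rotate u hu).takeUntil v hv, h1,
      fun e hemem => hperm.subset (hedges ▸ List.mem_append_left _ hemem)⟩

lemma connected_of_adj_reachable {G H : SimpleGraph V} (hG : G.Connected)
    (h : ∀ u v, G.Adj u v → H.Reachable u v) : H.Connected := by
  haveI := hG.nonempty
  refine ⟨fun u v => ?_⟩
  obtain ⟨p⟩ := hG.preconnected u v
  induction p with
  | nil => exact Reachable.refl _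
  | cons ha p ih => exact (h _ _ ha).trans ih

lemma omitted_exists {G T : SimpleGraph V} (hT : IsSpanningTree G T)
    {s : Set (Sym2 V)} (hs : s ∈ cycClasses G) : ∃ f ∈ s, f ∉ T.edgeSet := by
  obtain ⟨v, c, hc, rfl⟩ := hs
  by_contra hcon
  push_neg at hcon
  exact hT.2.IsAcyclic (c.transfer T hcon) (hc.transfer hcon)

lemma omitted_unique {G T : SimpleGraph V} (hcac : _root_.IsCactus G)
    (hT : IsSpanningTree G T) {s : Set (Sym2 V)} (hs : s ∈ cycClasses G)
    {f f' : Sym2 V} (hf : f ∈ s) (hf' : f' ∈ s)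
    (hfT : f ∉ T.edgeSet) (hf'T : f' ∉ T.edgeSet) : f = f' := by
  obtain ⟨v, c, hc, rfl⟩ := hs
  revert hf hfT
  induction f using Sym2.ind with | _ x y =>
  intro hfT hf
  have hadj : G.Adj x y := c.adj_of_mem_edges hf
  obtain ⟨p0⟩ := hT.2.isConnected.preconnected y x
  set P := p0.toPath with hP
  have hPG : ∀ e ∈ (P : T.Walk y x).edges, e ∈ G.edgeSet :=
    fun e heP => SimpleGraph.edgeSet_mono hT.1 ((P : T.Walk y x).edges_subset_edgeSet heP)
  set PG := (P : T.Walk y x).transfer G hPG with hPGdef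
  have hPGedges : PG.edges = (P : T.Walk y x).edges :=
    SimpleGraph.Walk.edges_transfer _ hPG
  have hnotmem : s(x, y) ∉ PG.edges := by
    rw [hPGedges]
    intro hmem
    exact hfT ((P : T.Walk y x).edges_subset_edgeSet hmem)
  have hc2 : (SimpleGraph.Walk.cons hadj PG).IsCycle :=
    (SimpleGraph.Walk.cons_isCycle_iff PG hadj).mpr ⟨P.2.transfer hPG, hnotmem⟩
  have hiff := hcac.2 v x c (SimpleGraph.Walk.cons hadj PG) hc hc2
    ⟨s(x, y), hf, by simp [SimpleGraph.Walk.edges_cons]⟩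
  have hf'c2 : f' ∈ (SimpleGraph.Walk.cons hadj PG).edges := (hiff f').mp hf'
  rw [SimpleGraph.Walk.edges_cons] at hf'c2
  rcases List.mem_cons.mp hf'c2 with h | h
  · exact h.symm
  · exact absurd ((P : T.Walk y x).edges_subset_edgeSet (hPGedges ▸ h)) hf'T

lemma mem_class_of_not_mem_tree {G T : SimpleGraph V} (hT : IsSpanningTree G T)
    {e : Sym2 V} (he : e ∈ G.edgeSet) (heT : e ∉ T.edgeSet) :
    ∃ s ∈ cycClasses G, e ∈ s := by
  revert he heT
  induction e using Sym2.ind with | _ x y =>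
  intro he heT
  have hadj : G.Adj x y := he
  obtain ⟨p0⟩ := hT.2.isConnected.preconnected y x
  set P := p0.toPath with hP
  have hPG : ∀ e ∈ (P : T.Walk y x).edges, e ∈ G.edgeSet :=
    fun e heP => SimpleGraph.edgeSet_mono hT.1 ((P : T.Walk y x).edges_subset_edgeSet heP)
  set PG := (P : T.Walk y x).transfer G hPG with hPGdef
  have hPGedges : PG.edges = (P : T.Walk y x).edges :=
    SimpleGraph.Walk.edges_transfer _ hPG
  have hnotmem : s(x, y) ∉ PG.edges := by
    rw [hPGedges]
    intro hmem
    exact heT ((P : T.Walk y x).edges_subset_edgeSet hmem)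
  have hc2 : (SimpleGraph.Walk.cons hadj PG).IsCycle :=
    (SimpleGraph.Walk.cons_isCycle_iff PG hadj).mpr ⟨P.2.transfer hPG, hnotmem⟩
  exact ⟨{g | g ∈ (SimpleGraph.Walk.cons hadj PG).edges},
    ⟨x, _, hc2, rfl⟩, by simp [SimpleGraph.Walk.edges_cons]⟩

lemma spanningTree_of_sel {G : SimpleGraph V} (hcac : _root_.IsCactus G)
    {sel : Set (Sym2 V) → Sym2 V} (hsel : ∀ s ∈ cycClasses G, sel s ∈ s) :
    IsSpanningTree G (G.deleteEdges (sel '' cycClasses G)) := by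
  set F := sel '' cycClasses G with hF
  refine ⟨SimpleGraph.deleteEdges_le _, ?_, ?_⟩
  · -- connected
    refine connected_of_adj_reachable hcac.1 (fun u v hadj => ?_)
    by_cases hmem : s(u, v) ∈ F
    · obtain ⟨s, hs, hse⟩ := hmem
      obtain ⟨a, c, hc, hceq⟩ := hs
      have hec : s(u, v) ∈ c.edges := by
        have := hsel s (⟨a, c, hc, hceq⟩ : s ∈ cycClasses G)
        rw [hse] at this
        rw [hceq] at this
        exact this
      obtain ⟨W, hW1, hW2⟩ := exists_walk_avoiding hc hec
      have hWavoid : ∀ e ∈ W.edges, e ∉ F := by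
        intro e heW heF
        obtain ⟨t, ht, hte⟩ := heF
        have hes : e ∈ s := by rw [hceq]; exact hW2 e heW
        have het : e ∈ t := hte ▸ hsel t ht
        have : t = s := classes_disjoint hcac ht ⟨a, c, hc, hceq⟩ het hes
        rw [this, hse] at hte
        exact hW1 (hte ▸ heW)
      exact ⟨W.toDeleteEdges F hWavoid⟩
    · exact SimpleGraph.Adj.reachable (by rw [SimpleGraph.deleteEdges_adj]; exact ⟨hadj, hmem⟩)
  · -- acyclic
    intro a c hc
    have hce : ∀ e ∈ c.edges, e ∈ G.edgeSet := fun e he =>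
      SimpleGraph.edgeSet_mono (SimpleGraph.deleteEdges_le F) (c.edges_subset_edgeSet he)
    have hcG := hc.transfer hce
    have hs : {g | g ∈ c.edges} ∈ cycClasses G :=
      ⟨a, c.transfer G hce, hcG, by rw [SimpleGraph.Walk.edges_transfer]⟩
    have hselmem : sel {g | g ∈ c.edges} ∈ c.edges := hsel _ hs
    have hselF : sel {g | g ∈ c.edges} ∈ F := ⟨_, hs, rfl⟩
    have hin := c.edges_subset_edgeSet hselmem
    rw [SimpleGraph.edgeSet_deleteEdges] at hin
    exact hin.2 hselF

lemma exists_sel_of_spanningTree [Nonempty V] {G T : SimpleGraph V}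
    (hcac : _root_.IsCactus G) (hT : IsSpanningTree G T) :
    ∃ sel : Set (Sym2 V) → Sym2 V, (∀ s ∈ cycClasses G, sel s ∈ s) ∧
      T.edgeSet = G.edgeSet \ (sel '' cycClasses G) := by
  have hex : ∀ s, s ∈ cycClasses G → ∃ f, f ∈ s ∧ f ∉ T.edgeSet := by
    intro s hs
    obtain ⟨f, h1, h2⟩ := omitted_exists hT hs
    exact ⟨f, h1, h2⟩
  haveI : Nonempty (Sym2 V) := Nonempty.map (fun v => s(v, v)) ‹Nonempty V›
  choose! sel hsel1 hsel2 using hex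
  refine ⟨sel, hsel1, ?_⟩
  ext e
  constructor
  · intro heT
    refine ⟨SimpleGraph.edgeSet_mono hT.1 heT, ?_⟩
    rintro ⟨s, hs, rfl⟩
    exact hsel2 s hs heT
  · rintro ⟨heG, heF⟩
    by_contra heT
    obtain ⟨s, hs, hes⟩ := mem_class_of_not_mem_tree hT heG heT
    have : e = sel s := omitted_unique hcac hT hs hes (hsel1 s hs) heT (hsel2 s hs)
    exact heF ⟨s, hs, this.symm⟩

lemma treeWeight_formula [Fintype V] {G H : SimpleGraph V} (w : Sym2 V → ℝ)
    {sel : Set (Sym2 V) → Sym2 V}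
    (hinj : Set.InjOn sel (cycClasses G))
    (hsub : ∀ s ∈ cycClasses G, sel s ∈ G.edgeSet)
    (hH : H.edgeSet = G.edgeSet \ (sel '' cycClasses G)) :
    treeWeight H w =
      ∑ e ∈ (Set.toFinite G.edgeSet).toFinset, w e
        - ∑ s ∈ (Set.toFinite (cycClasses G)).toFinset, w (sel s) := by
  classical
  have hDFsub : (Set.toFinite (cycClasses G)).toFinset.image sel ⊆
      (Set.toFinite G.edgeSet).toFinset := by
    intro e he
    rw [Finset.mem_image] at he
    obtain ⟨s, hs, rfl⟩ := he
    rw [Set.Finite.mem_toFinset]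
    exact hsub s ((Set.Finite.mem_toFinset _).mp hs)
  have hHfin : H.edgeSet = ↑((Set.toFinite G.edgeSet).toFinset \
      (Set.toFinite (cycClasses G)).toFinset.image sel) := by
    rw [hH, Finset.coe_sdiff, Finset.coe_image, Set.Finite.coe_toFinset,
      Set.Finite.coe_toFinset]
  have h1 : treeWeight H w = ∑ e ∈ (Set.toFinite G.edgeSet).toFinset \
      (Set.toFinite (cycClasses G)).toFinset.image sel, w e := by
    rw [treeWeight, hHfin, finsum_mem_coe_finset]
  rw [h1, Finset.sum_sdiff_eq_sub hDFsub]
  congr 1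
  rw [Finset.sum_image]
  intro x hx y hy hxy
  exact hinj ((Set.Finite.mem_toFinset _).mp hx) ((Set.Finite.mem_toFinset _).mp hy) hxy

end Stmt8Aux

/-- Let the underlying graph of an edge-uncertainty instance be a
cactus, and for `Q ⊆ E` let `A' e = {w e}` for `e ∈ Q` and `A' e = A e` otherwise.
Then `Q` is a feasible query set iff every simple cycle `C` of `G` contains an edge
`f` that is always maximal in `C` with respect to `(A' e)`. -/
theorem stmt8 {V : Type*} [Fintype V] (G : SimpleGraph V) (A : Sym2 V → Set ℝ)
    (w : Sym2 V → ℝ)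
    (hUG : IsUncertaintyGraph G A)
    (hw : ∀ e ∈ G.edgeSet, w e ∈ A e)
    (hcactus : IsCactus G)
    (Q : Set (Sym2 V)) (hQE : Q ⊆ G.edgeSet)
    (A' : Sym2 V → Set ℝ) (hA' : A' = fun e => if e ∈ Q then {w e} else A e) :
    FeasibleQuerySet G A w Q ↔
      ∀ (v : V) (C : G.Walk v v), C.IsCycle →
        ∃ f ∈ C.edges, ∀ e ∈ C.edges, e ≠ f → sSup (A' e) ≤ sInf (A' f) := by
  classical
  obtain ⟨hconn, hsets⟩ := hUG
  haveI hneV : Nonempty V := hconn.nonempty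
  haveI : Nonempty (Sym2 V) := Nonempty.map (fun v => s(v, v)) hneV
  have hA'e : ∀ e, A' e = if e ∈ Q then {w e} else A e := fun e => by rw [hA']
  have hA'ne : ∀ e ∈ G.edgeSet, (A' e).Nonempty := by
    intro e he; rw [hA'e]; split
    · exact ⟨w e, rfl⟩
    · exact (hsets e he).1
  have hA'bb : ∀ e ∈ G.edgeSet, BddBelow (A' e) := by
    intro e he; rw [hA'e]; split
    · exact bddBelow_singleton
    · exact (hsets e he).2.1
  have hA'ba : ∀ e ∈ G.edgeSet, BddAbove (A' e) := by
    intro e he; rw [hA'e]; split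
    · exact bddAbove_singleton
    · exact (hsets e he).2.2.1
  have hmemA' : ∀ w', Admissible G A w Q w' → ∀ e ∈ G.edgeSet, w' e ∈ A' e := by
    intro w' hadm e he
    rw [hA'e]
    split
    · next h => rw [hadm.1 e h]; rfl
    · next h => exact hadm.2 e he h
  have hadmw : Admissible G A w Q w := ⟨fun e _ => rfl, fun e he _ => hw e he⟩
  constructor
  · rintro ⟨T, hT⟩ v C hC
    have hMST := hT w hadmw
    have hTst : IsSpanningTree G T := hMST.1
    have hs : {e | e ∈ C.edges} ∈ Stmt8Aux.cycClasses G := ⟨v, C, hC, rfl⟩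
    obtain ⟨sel, hsel, hTedge⟩ := Stmt8Aux.exists_sel_of_spanningTree hcactus hTst
    refine ⟨sel {e | e ∈ C.edges}, hsel _ hs, ?_⟩
    intro e he hef
    by_contra hlt
    push_neg at hlt
    obtain ⟨t, ht1, ht2⟩ := exists_between hlt
    set f := sel {e | e ∈ C.edges} with hfdef
    have hfC : f ∈ C.edges := hsel _ hs
    have hfE : f ∈ G.edgeSet := C.edges_subset_edgeSet hfC
    have heE : e ∈ G.edgeSet := C.edges_subset_edgeSet he
    obtain ⟨a, haA, hat⟩ := exists_lt_of_csInf_lt (hA'ne f hfE) ht1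
    obtain ⟨b, hbA, htb⟩ := exists_lt_of_lt_csSup (hA'ne e heE) ht2
    have hab : a < b := hat.trans htb
    set w' : Sym2 V → ℝ := fun g => if g = e then b else if g = f then a else w g with hw'def
    have hw'app : ∀ g, w' g = if g = e then b else if g = f then a else w g :=
      fun g => rfl
    have hw'e : w' e = b := by rw [hw'app, if_pos rfl]
    have hw'f : w' f = a := by
      rw [hw'app, if_neg (fun h : f = e => hef h.symm), if_pos rfl]
    have hbmem : b ∈ if e ∈ Q then ({w e} : Set ℝ) else A e := by rw [← hA'e]; exact hbA
    have hamem : a ∈ if f ∈ Q then ({w f} : Set ℝ) else A f := by rw [← hA'e]; exact haA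
    have hadm' : Admissible G A w Q w' := by
      constructor
      · intro g hg
        by_cases hge : g = e
        · subst hge
          rw [hw'e]
          rw [if_pos hg] at hbmem
          exact hbmem
        · by_cases hgf : g = f
          · subst hgf
            rw [hw'f]
            rw [if_pos hg] at hamem
            exact hamem
          · rw [hw'app, if_neg hge, if_neg hgf]
      · intro g hgE hgQ
        by_cases hge : g = e
        · subst hge
          rw [hw'e]
          rw [if_neg hgQ] at hbmem
          exact hbmem
        · by_cases hgf : g = f
          · subst hgf
            rw [hw'f]
            rw [if_neg hgQ] at hamem
            exact hamem
          · rw [hw'app, if_neg hge, if_neg hgf]; exact hw g hgE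
    set sel' : Set (Sym2 V) → Sym2 V :=
      fun s => if s = {e | e ∈ C.edges} then e else sel s with hsel'def
    have hsel'app : ∀ s, sel' s = if s = {e | e ∈ C.edges} then e else sel s :=
      fun s => rfl
    have hsel' : ∀ s ∈ Stmt8Aux.cycClasses G, sel' s ∈ s := by
      intro s hsmem
      rw [hsel'app]
      by_cases hseq : s = {e | e ∈ C.edges}
      · rw [if_pos hseq, hseq]; exact he
      · rw [if_neg hseq]; exact hsel s hsmem
    have hT'' := Stmt8Aux.spanningTree_of_sel hcactus hsel'
    have hMST' := hT w' hadm'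
    have hle := hMST'.2 _ hT''
    have hTw := Stmt8Aux.treeWeight_formula (G := G) w'
      (Stmt8Aux.sel_injOn hcactus hsel)
      (fun s hsm => Stmt8Aux.classes_subset_edgeSet hsm (hsel s hsm)) hTedge
    have hT''w := Stmt8Aux.treeWeight_formula (G := G) w'
      (Stmt8Aux.sel_injOn hcactus hsel')
      (fun s hsm => Stmt8Aux.classes_subset_edgeSet hsm (hsel' s hsm))
      (G.edgeSet_deleteEdges _)
    have hsum : ∑ s ∈ (Set.toFinite (Stmt8Aux.cycClasses G)).toFinset, w' (sel s) <
        ∑ s ∈ (Set.toFinite (Stmt8Aux.cycClasses G)).toFinset, w' (sel' s) := by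
      apply Finset.sum_lt_sum
      · intro i _
        by_cases hiC : i = {e | e ∈ C.edges}
        · subst hiC
          rw [hsel'app, if_pos rfl, hw'e, ← hfdef, hw'f]
          exact hab.le
        · rw [hsel'app, if_neg hiC]
      · refine ⟨{e | e ∈ C.edges}, (Set.Finite.mem_toFinset _).mpr hs, ?_⟩
        rw [hsel'app, if_pos rfl, hw'e, ← hfdef, hw'f]
        exact hab
    rw [hTw, hT''w] at hle
    linarith
  · intro hyp
    have hex : ∀ s, s ∈ Stmt8Aux.cycClasses G →
        ∃ f, f ∈ s ∧ ∀ e ∈ s, e ≠ f → sSup (A' e) ≤ sInf (A' f) := by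
      rintro s ⟨v, c, hc, rfl⟩
      obtain ⟨f, hfc, hmax⟩ := hyp v c hc
      exact ⟨f, hfc, fun e hes hef => hmax e hes hef⟩
    choose! f hf hfmax using hex
    refine ⟨G.deleteEdges (f '' Stmt8Aux.cycClasses G), ?_⟩
    intro w' hadm
    have hTst := Stmt8Aux.spanningTree_of_sel hcactus hf
    refine ⟨hTst, ?_⟩
    intro T' hT'
    obtain ⟨sel', hsel', hT'edge⟩ := Stmt8Aux.exists_sel_of_spanningTree hcactus hT'
    rw [Stmt8Aux.treeWeight_formula (G := G) w' (Stmt8Aux.sel_injOn hcactus hf)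
        (fun s hsm => Stmt8Aux.classes_subset_edgeSet hsm (hf s hsm))
        (G.edgeSet_deleteEdges _),
      Stmt8Aux.treeWeight_formula (G := G) w' (Stmt8Aux.sel_injOn hcactus hsel')
        (fun s hsm => Stmt8Aux.classes_subset_edgeSet hsm (hsel' s hsm)) hT'edge]
    apply sub_le_sub_left
    apply Finset.sum_le_sum
    intro s hsF
    have hsm : s ∈ Stmt8Aux.cycClasses G := (Set.Finite.mem_toFinset _).mp hsF
    by_cases hsf : sel' s = f s
    · rw [hsf]
    · have hselE : sel' s ∈ G.edgeSet :=
        Stmt8Aux.classes_subset_edgeSet hsm (hsel' s hsm)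
      have hfE : f s ∈ G.edgeSet := Stmt8Aux.classes_subset_edgeSet hsm (hf s hsm)
      have h1 : w' (sel' s) ≤ sSup (A' (sel' s)) :=
        le_csSup (hA'ba _ hselE) (hmemA' w' hadm _ hselE)
      have h2 := hfmax s hsm (sel' s) (hsel' s hsm) hsf
      have h3 : sInf (A' (f s)) ≤ w' (f s) :=
        csInf_le (hA'bb _ hfE) (hmemA' w' hadm _ hfE)
      linarith
end

section
/- Let n ≥ 4, let G be the simple graph on vertex set {v_1, …, v_n} with edge set E = {{v_1, v_i} : i = 2, …, n} ∪ {{v_n, v_i} : i = 1, …, n−1}, and fix j with 2 ≤ j ≤ n−1. Equip G with uncertainty sets A_{{v_1,v_n}} = {1}, A_{{v_1,v_i}} = (0,1) for i = 2, …, n−1, and A_{{v_n,v_i}} = (0,n) for i = 2, …, n−1, and true weights w_{{v_j,v_n}} = n−1, w_{{v_1,v_n}} = 1, and w_e = 1/2 for all other edges e. Then a set Q ⊆ E is a feasible query set for the minimum spanning star problem on this instance if and only if {v_j, v_n} ∈ Q; in particular, the singleton {{v_j, v_n}} is feasible and verifies the spanning star centred at v_1. -/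
open scoped Classical

variable {V : Type*}

/-- `c` is the centre of a spanning star of `G`: it is adjacent to every other vertex. -/
def IsStarCenter (G : SimpleGraph V) (c : V) : Prop := ∀ u : V, u ≠ c → G.Adj c u

/-- The weight of the spanning star centred at `c`: the sum of the weights of the edges
from `c` to all other vertices. -/
noncomputable def starWeight [Fintype V] (c : V) (w : Sym2 V → ℝ) : ℝ :=
  ∑ u ∈ Finset.univ.erase c, w s(c, u)

/-- `Q` verifies the spanning star centred at `c`: this star has minimum weight among
all spanning stars with respect to every admissible weight function. -/
def VerifiesStar [Fintype V] (G : SimpleGraph V) (A : Sym2 V → Set ℝ) (w : Sym2 V → ℝ)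
    (Q : Set (Sym2 V)) (c : V) : Prop :=
  IsStarCenter G c ∧ ∀ w' : Sym2 V → ℝ, Admissible G A w Q w' →
    ∀ c' : V, IsStarCenter G c' → starWeight c w' ≤ starWeight c' w'

/-- A feasible query set for the minimum spanning star problem. -/
def FeasibleStarQuery [Fintype V] (G : SimpleGraph V) (A : Sym2 V → Set ℝ)
    (w : Sym2 V → ℝ) (Q : Set (Sym2 V)) : Prop :=
  ∃ c : V, VerifiesStar G A w Q c

lemma starWeight_split₁ {V : Type*} [Fintype V] (c a : V) (w : Sym2 V → ℝ) (ha : a ≠ c) :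
    starWeight c w = w s(c, a) + ∑ u ∈ (Finset.univ.erase c).erase a, w s(c, u) := by
  rw [starWeight, ← Finset.add_sum_erase _ _ (Finset.mem_erase.mpr ⟨ha, Finset.mem_univ a⟩)]

lemma starWeight_split₂ {V : Type*} [Fintype V] (c a b : V) (w : Sym2 V → ℝ)
    (ha : a ≠ c) (hb : b ≠ c) (hab : b ≠ a) :
    starWeight c w = w s(c, a) +
      (w s(c, b) + ∑ u ∈ ((Finset.univ.erase c).erase a).erase b, w s(c, u)) := by
  rw [starWeight_split₁ c a w ha, ← Finset.add_sum_erase _ _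
    (Finset.mem_erase.mpr ⟨hab, Finset.mem_erase.mpr ⟨hb, Finset.mem_univ b⟩⟩)]

lemma card_erase₂ {V : Type*} [Fintype V] (c a : V) (ha : a ≠ c) :
    ((Finset.univ.erase c).erase a).card = Fintype.card V - 2 := by
  rw [Finset.card_erase_of_mem (Finset.mem_erase.mpr ⟨ha, Finset.mem_univ a⟩),
    Finset.card_erase_of_mem (Finset.mem_univ c), Finset.card_univ]
  omega

lemma card_erase₃ {V : Type*} [Fintype V] (c a b : V) (ha : a ≠ c) (hb : b ≠ c) (hab : b ≠ a) :
    (((Finset.univ.erase c).erase a).erase b).card = Fintype.card V - 3 := by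
  rw [Finset.card_erase_of_mem
      (Finset.mem_erase.mpr ⟨hab, Finset.mem_erase.mpr ⟨hb, Finset.mem_univ b⟩⟩),
    card_erase₂ c a ha]
  omega

lemma starWeight_le_bound {V : Type*} [Fintype V] (c a : V) (w : Sym2 V → ℝ) (ha : a ≠ c)
    (h1 : w s(c, a) = 1) (h2 : ∀ u, u ≠ c → u ≠ a → w s(c, u) ≤ 1) :
    starWeight c w ≤ 1 + ((Fintype.card V - 2 : ℕ) : ℝ) := by
  rw [starWeight_split₁ c a w ha, h1]
  have hb := Finset.sum_le_card_nsmul ((Finset.univ.erase c).erase a)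
    (fun u => w s(c, u)) 1 (fun u hu => by
      obtain ⟨h₁, h₂⟩ := Finset.mem_erase.mp hu
      exact h2 u (Finset.mem_erase.mp h₂).1 h₁)
  rw [card_erase₂ c a ha, nsmul_eq_mul, mul_one] at hb
  linarith

lemma starWeight_ge_bound {V : Type*} [Fintype V] (c a b : V) (w : Sym2 V → ℝ) (x : ℝ)
    (ha : a ≠ c) (hb : b ≠ c) (hab : b ≠ a)
    (h1 : w s(c, a) = 1) (h2 : w s(c, b) = x)
    (h3 : ∀ u, u ≠ c → u ≠ a → u ≠ b → 0 ≤ w s(c, u)) :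
    1 + x ≤ starWeight c w := by
  rw [starWeight_split₂ c a b w ha hb hab, h1, h2]
  have hs : (0 : ℝ) ≤ ∑ u ∈ ((Finset.univ.erase c).erase a).erase b, w s(c, u) :=
    Finset.sum_nonneg (fun u hu => by
      obtain ⟨h₁, h₂⟩ := Finset.mem_erase.mp hu
      obtain ⟨h₃, h₄⟩ := Finset.mem_erase.mp h₂
      exact h3 u (Finset.mem_erase.mp h₄).1 h₃ h₁)
  linarith

lemma starWeight_eq₁ {V : Type*} [Fintype V] (c a : V) (w : Sym2 V → ℝ) (ha : a ≠ c)
    (h1 : w s(c, a) = 1) (h2 : ∀ u, u ≠ c → u ≠ a → w s(c, u) = 1 / 2) :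
    starWeight c w = 1 + ((Fintype.card V - 2 : ℕ) : ℝ) * (1 / 2) := by
  rw [starWeight_split₁ c a w ha, h1]
  congr 1
  rw [Finset.sum_congr rfl (fun u hu => by
      obtain ⟨h₁, h₂⟩ := Finset.mem_erase.mp hu
      exact h2 u (Finset.mem_erase.mp h₂).1 h₁),
    Finset.sum_const, card_erase₂ c a ha, nsmul_eq_mul]

lemma starWeight_eq₂ {V : Type*} [Fintype V] (c a b : V) (w : Sym2 V → ℝ)
    (ha : a ≠ c) (hb : b ≠ c) (hab : b ≠ a)
    (h1 : w s(c, a) = 1) (h2 : w s(c, b) = 1 / 4)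
    (h3 : ∀ u, u ≠ c → u ≠ a → u ≠ b → w s(c, u) = 1 / 2) :
    starWeight c w = 1 + (1 / 4 + ((Fintype.card V - 3 : ℕ) : ℝ) * (1 / 2)) := by
  rw [starWeight_split₂ c a b w ha hb hab, h1, h2]
  congr 2
  rw [Finset.sum_congr rfl (fun u hu => by
      obtain ⟨h₁, h₂⟩ := Finset.mem_erase.mp hu
      obtain ⟨h₃, h₄⟩ := Finset.mem_erase.mp h₂
      exact h3 u (Finset.mem_erase.mp h₄).1 h₃ h₁),
    Finset.sum_const, card_erase₃ c a b ha hb hab, nsmul_eq_mul]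

set_option maxHeartbeats 1000000 in
/-- For `n ≥ 4` and `2 ≤ j ≤ n − 1`, consider the graph on `Fin n`
(`v_1 = 0`, `v_n = n − 1`, `v_j = j − 1`) whose edges are all pairs containing `v_1` or
`v_n`, with uncertainty sets `A {v_1,v_n} = {1}`, `A {v_1,v_i} = (0,1)`,
`A {v_n,v_i} = (0,n)`, and true weights `w {v_j,v_n} = n − 1`, `w {v_1,v_n} = 1` and
`w e = 1/2` otherwise.  Then `Q` is a feasible query set for the minimum spanning star
problem iff `{v_j, v_n} ∈ Q`; in particular the singleton `{{v_j, v_n}}` is feasible and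
verifies the spanning star centred at `v_1`. -/
theorem stmt12 (n : ℕ) (hn : 4 ≤ n) (j : ℕ) (hj2 : 2 ≤ j) (hjn : j ≤ n - 1)
    (v₁ : Fin n) (hv₁ : v₁ = ⟨0, by omega⟩)
    (vₙ : Fin n) (hvₙ : vₙ = ⟨n - 1, by omega⟩)
    (vj : Fin n) (hvj : vj = ⟨j - 1, by omega⟩)
    (G : SimpleGraph (Fin n))
    (hG : G = SimpleGraph.fromRel (fun u _ => u = v₁ ∨ u = vₙ))
    (A : Sym2 (Fin n) → Set ℝ)
    (hA : A = fun e =>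
      if e = s(v₁, vₙ) then {1}
      else if v₁ ∈ e then Set.Ioo (0 : ℝ) 1
      else Set.Ioo (0 : ℝ) n)
    (w : Sym2 (Fin n) → ℝ)
    (hw : w = fun e =>
      if e = s(vj, vₙ) then (n : ℝ) - 1
      else if e = s(v₁, vₙ) then 1
      else 1 / 2) :
    (∀ Q : Set (Sym2 (Fin n)), Q ⊆ G.edgeSet →
      (FeasibleStarQuery G A w Q ↔ s(vj, vₙ) ∈ Q)) ∧
    VerifiesStar G A w {s(vj, vₙ)} v₁ := by
  have hnR : (4 : ℝ) ≤ (n : ℝ) := by exact_mod_cast hn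
  have hne_1n : v₁ ≠ vₙ := by
    rw [hv₁, hvₙ]; simp only [ne_eq, Fin.mk.injEq]; omega
  have hne_j1 : vj ≠ v₁ := by
    rw [hv₁, hvj]; simp only [ne_eq, Fin.mk.injEq]; omega
  have hne_jn : vj ≠ vₙ := by
    rw [hvₙ, hvj]; simp only [ne_eq, Fin.mk.injEq]; omega
  -- adjacency
  have hG' : ∀ a b : Fin n, G.Adj a b ↔ a ≠ b ∧ ((a = v₁ ∨ a = vₙ) ∨ (b = v₁ ∨ b = vₙ)) := by
    subst hG; intro a b; rw [SimpleGraph.fromRel_adj]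
  -- edges
  have hedge1 : ∀ u : Fin n, u ≠ v₁ → s(v₁, u) ∈ G.edgeSet := by
    intro u hu
    rw [SimpleGraph.mem_edgeSet, hG']
    exact ⟨Ne.symm hu, Or.inl (Or.inl rfl)⟩
  have hedgen : ∀ u : Fin n, u ≠ vₙ → s(vₙ, u) ∈ G.edgeSet := by
    intro u hu
    rw [SimpleGraph.mem_edgeSet, hG']
    exact ⟨Ne.symm hu, Or.inl (Or.inr rfl)⟩
  have hedge1n : s(v₁, vₙ) ∈ G.edgeSet := hedge1 vₙ (Ne.symm hne_1n)
  -- Sym2 disequalities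
  have s1 : s(v₁, vₙ) ≠ s(vj, vₙ) := by
    intro h
    rw [Sym2.eq_iff] at h
    rcases h with ⟨h1, h2⟩ | ⟨h1, h2⟩ <;>
      first
        | exact hne_j1 h1.symm | exact hne_j1 h1 | exact hne_1n h1 | exact hne_1n h1.symm
  have s2 : ∀ u : Fin n, u ≠ vₙ → s(v₁, u) ≠ s(v₁, vₙ) := by
    intro u hu h
    rw [Sym2.eq_iff] at h
    rcases h with ⟨h1, h2⟩ | ⟨h1, h2⟩ <;>
      first
        | exact hu h2 | exact hu h2.symm | exact hne_1n h1 | exact hne_1n h1.symm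
  have s3 : ∀ u : Fin n, s(v₁, u) ≠ s(vj, vₙ) := by
    intro u h
    rw [Sym2.eq_iff] at h
    rcases h with ⟨h1, h2⟩ | ⟨h1, h2⟩ <;>
      first
        | exact hne_j1 h1.symm | exact hne_j1 h1 | exact hne_1n h1 | exact hne_1n h1.symm
  have s4 : ∀ u : Fin n, u ≠ vj → s(vₙ, u) ≠ s(vj, vₙ) := by
    intro u hu h
    rw [Sym2.eq_iff] at h
    rcases h with ⟨h1, h2⟩ | ⟨h1, h2⟩ <;>
      first
        | exact hne_jn h1.symm | exact hne_jn h1 | exact hu h2 | exact hu h2.symm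
  have s5 : ∀ u : Fin n, u ≠ v₁ → s(vₙ, u) ≠ s(v₁, vₙ) := by
    intro u hu h
    rw [Sym2.eq_iff] at h
    rcases h with ⟨h1, h2⟩ | ⟨h1, h2⟩ <;>
      first
        | exact hne_1n h1 | exact hne_1n h1.symm | exact hu h2 | exact hu h2.symm
  have s6 : ∀ u : Fin n, u ≠ v₁ → v₁ ∉ s(vₙ, u) := by
    intro u hu h
    rcases Sym2.mem_iff.mp h with h | h
    · exact hne_1n h
    · exact hu h.symm
  -- evaluation of A
  have hA1n : A s(v₁, vₙ) = {1} := by rw [hA]; beta_reduce; rw [if_pos rfl]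
  have hA1 : ∀ u : Fin n, u ≠ vₙ → A s(v₁, u) = Set.Ioo (0 : ℝ) 1 := by
    intro u hu
    rw [hA]
    beta_reduce
    rw [if_neg (s2 u hu), if_pos (Sym2.mem_mk_left v₁ u)]
  have hAn : ∀ u : Fin n, u ≠ v₁ → A s(vₙ, u) = Set.Ioo (0 : ℝ) n := by
    intro u hu
    rw [hA]
    beta_reduce
    rw [if_neg (s5 u hu), if_neg (s6 u hu)]
  -- evaluation of w
  have hw_jn : w s(vj, vₙ) = (n : ℝ) - 1 := by rw [hw]; beta_reduce; rw [if_pos rfl]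
  have hw_1n : w s(v₁, vₙ) = 1 := by
    rw [hw]; beta_reduce; rw [if_neg s1, if_pos rfl]
  have hw_half : ∀ e, e ≠ s(vj, vₙ) → e ≠ s(v₁, vₙ) → w e = 1 / 2 := by
    intro e h1 h2; rw [hw]; beta_reduce; rw [if_neg h1, if_neg h2]
  -- true weights are admissible everywhere
  have hwA : ∀ e, w e ∈ A e := by
    intro e
    by_cases h1 : e = s(v₁, vₙ)
    · subst h1; rw [hw_1n, hA1n]; exact rfl
    · by_cases h2 : v₁ ∈ e
      · have hA' : A e = Set.Ioo (0 : ℝ) 1 := by rw [hA]; beta_reduce; rw [if_neg h1, if_pos h2]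
        have hnj : e ≠ s(vj, vₙ) := by
          intro h; subst h
          rcases Sym2.mem_iff.mp h2 with h | h
          · exact hne_j1 h.symm
          · exact hne_1n h
        rw [hA', hw_half e hnj h1]
        constructor <;> norm_num
      · have hA' : A e = Set.Ioo (0 : ℝ) n := by rw [hA]; beta_reduce; rw [if_neg h1, if_neg h2]
        rw [hA']
        by_cases h3 : e = s(vj, vₙ)
        · subst h3; rw [hw_jn]; constructor <;> linarith
        · rw [hw_half e h3 h1]; constructor <;> linarith
  have admVals : ∀ (Q : Set (Sym2 (Fin n))) (w' : Sym2 (Fin n) → ℝ),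
      Admissible G A w Q w' → ∀ e ∈ G.edgeSet, w' e ∈ A e := by
    rintro Q w' ⟨h1, h2⟩ e he
    by_cases hQ : e ∈ Q
    · rw [h1 e hQ]; exact hwA e
    · exact h2 e he hQ
  -- star centers
  have hcV1 : IsStarCenter G v₁ := by
    intro u hu; rw [hG']; exact ⟨Ne.symm hu, Or.inl (Or.inl rfl)⟩
  have hcVn : IsStarCenter G vₙ := by
    intro u hu; rw [hG']; exact ⟨Ne.symm hu, Or.inl (Or.inr rfl)⟩
  have hcenter : ∀ c : Fin n, IsStarCenter G c → c = v₁ ∨ c = vₙ := by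
    intro c hc
    by_contra h
    push_neg at h
    obtain ⟨hc1, hcn⟩ := h
    have hex : ∃ u : Fin n, u ≠ c ∧ u ≠ v₁ ∧ u ≠ vₙ := by
      have hcard : ({c, v₁, vₙ} : Finset (Fin n)).card ≤ 3 := by
        apply le_trans (Finset.card_insert_le _ _)
        have := Finset.card_insert_le v₁ ({vₙ} : Finset (Fin n))
        simp only [Finset.card_singleton] at this ⊢
        omega
      have hne : (({c, v₁, vₙ} : Finset (Fin n))ᶜ).Nonempty := by
        rw [← Finset.card_pos, Finset.card_compl, Fintype.card_fin]
        omega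
      obtain ⟨u, hu⟩ := hne
      rw [Finset.mem_compl] at hu
      simp only [Finset.mem_insert, Finset.mem_singleton] at hu
      push_neg at hu
      exact ⟨u, hu⟩
    obtain ⟨u, huc, hu1, hun⟩ := hex
    have := (hG' c u).mp (hc u huc)
    rcases this.2 with (h | h) | (h | h)
    · exact hc1 h
    · exact hcn h
    · exact hu1 h
    · exact hun h
  have hcast2 : ((n - 2 : ℕ) : ℝ) = (n : ℝ) - 2 := by
    rw [Nat.cast_sub (by omega)]; norm_num
  have hcast3 : ((n - 3 : ℕ) : ℝ) = (n : ℝ) - 3 := by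
    rw [Nat.cast_sub (by omega)]; norm_num
  -- upper bound on v₁'s star
  have lowV1 : ∀ w' : Sym2 (Fin n) → ℝ, (∀ e ∈ G.edgeSet, w' e ∈ A e) →
      starWeight v₁ w' ≤ (n : ℝ) - 1 := by
    intro w' H
    have h1 : w' s(v₁, vₙ) = 1 := by
      have := H _ hedge1n; rwa [hA1n] at this
    have h2 : ∀ u : Fin n, u ≠ v₁ → u ≠ vₙ → w' s(v₁, u) ≤ 1 := by
      intro u hu1 hun
      have := H _ (hedge1 u hu1)
      rw [hA1 u hun] at this
      exact le_of_lt this.2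
    have := starWeight_le_bound v₁ vₙ w' (Ne.symm hne_1n) h1 h2
    rw [Fintype.card_fin, hcast2] at this
    linarith
  -- lower bound on vₙ's star
  have highVn : ∀ w' : Sym2 (Fin n) → ℝ, (∀ e ∈ G.edgeSet, w' e ∈ A e) →
      w' s(vₙ, vj) = (n : ℝ) - 1 → (n : ℝ) ≤ starWeight vₙ w' := by
    intro w' H hj
    have h1 : w' s(vₙ, v₁) = 1 := by
      have := H _ hedge1n
      rw [hA1n] at this
      rw [Sym2.eq_swap]
      exact this
    have h3 : ∀ u : Fin n, u ≠ vₙ → u ≠ v₁ → u ≠ vj → 0 ≤ w' s(vₙ, u) := by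
      intro u hun hu1 _
      have := H _ (hedgen u hun)
      rw [hAn u hu1] at this
      exact le_of_lt this.1
    have := starWeight_ge_bound vₙ v₁ vj w' ((n : ℝ) - 1) hne_1n hne_jn hne_j1 h1 hj h3
    linarith
  -- any Q containing the edge verifies v₁
  have key : ∀ Q : Set (Sym2 (Fin n)), s(vj, vₙ) ∈ Q → VerifiesStar G A w Q v₁ := by
    intro Q hQ
    refine ⟨hcV1, ?_⟩
    intro w' hadm c' hc'
    have H := admVals Q w' hadm
    rcases hcenter c' hc' with h | h
    · rw [h]
    · rw [h]
      have hj : w' s(vₙ, vj) = (n : ℝ) - 1 := by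
        rw [Sym2.eq_swap, hadm.1 _ hQ, hw_jn]
      have := highVn w' H hj
      have := lowV1 w' H
      linarith
  -- the true weights are admissible for any Q
  have hwAdm : ∀ Q : Set (Sym2 (Fin n)), Admissible G A w Q w :=
    fun Q => ⟨fun e _ => rfl, fun e he _ => hwA e⟩
  constructor
  · intro Q hQsub
    constructor
    · rintro ⟨c, hc1, hc2⟩
      by_contra hQ
      rcases hcenter c hc1 with h | h
      · -- c = v₁ : decrease the unqueried heavy edge
        rw [h] at hc2
        set w'' : Sym2 (Fin n) → ℝ :=
          fun e => if e = s(vj, vₙ) then (1 / 4 : ℝ) else w e with hw''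
        have hval : ∀ e, e ≠ s(vj, vₙ) → w'' e = w e := by
          intro e he; rw [hw'']; beta_reduce; rw [if_neg he]
        have hadm : Admissible G A w Q w'' := by
          constructor
          · intro e he
            exact hval e (fun h => hQ (h ▸ he))
          · intro e he _
            by_cases h : e = s(vj, vₙ)
            · subst h
              rw [hw'']
              beta_reduce
              rw [if_pos rfl, Sym2.eq_swap, hAn vj hne_j1]
              constructor <;> linarith
            · rw [hval e h]; exact hwA e
        have e1 : starWeight v₁ w'' = 1 + ((n : ℝ) - 2) * (1 / 2) := by
          have h1 : w'' s(v₁, vₙ) = 1 := by rw [hval _ s1, hw_1n]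
          have h2 : ∀ u : Fin n, u ≠ v₁ → u ≠ vₙ → w'' s(v₁, u) = 1 / 2 := by
            intro u hu1 hun
            rw [hval _ (s3 u), hw_half _ (s3 u) (s2 u hun)]
          have := starWeight_eq₁ v₁ vₙ w'' (Ne.symm hne_1n) h1 h2
          rwa [Fintype.card_fin, hcast2] at this
        have e2 : starWeight vₙ w'' = 1 + (1 / 4 + ((n : ℝ) - 3) * (1 / 2)) := by
          have h1 : w'' s(vₙ, v₁) = 1 := by
            rw [Sym2.eq_swap, hval _ s1, hw_1n]
          have h2 : w'' s(vₙ, vj) = 1 / 4 := by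
            rw [hw'']; beta_reduce; rw [if_pos Sym2.eq_swap]
          have h3 : ∀ u : Fin n, u ≠ vₙ → u ≠ v₁ → u ≠ vj → w'' s(vₙ, u) = 1 / 2 := by
            intro u hun hu1 huj
            rw [hval _ (s4 u huj), hw_half _ (s4 u huj) (s5 u hu1)]
          have := starWeight_eq₂ vₙ v₁ vj w'' hne_1n hne_jn hne_j1 h1 h2 h3
          rwa [Fintype.card_fin, hcast3] at this
        have hcmp := hc2 w'' hadm vₙ hcVn
        rw [e1, e2] at hcmp
        linarith
      · -- c = vₙ : true weights already refute it
        rw [h] at hc2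
        have h1 := hc2 w (hwAdm Q) v₁ hcV1
        have h2 : w s(vₙ, vj) = (n : ℝ) - 1 := by rw [Sym2.eq_swap, hw_jn]
        have h3 := highVn w (fun e _ => hwA e) h2
        have h4 := lowV1 w (fun e _ => hwA e)
        linarith
    · intro hQ
      exact ⟨v₁, key Q hQ⟩
  · exact key {s(vj, vₙ)} rfl
end

section
/- Let (G,(A_e)_{e∈E}) be an edge-uncertainty graph with true weights w_e ∈ A_e, let C be a cycle in G, and let f be a non-trivial edge of C with U_f > U_e for all edges e of C − f. If Q is a feasible query set that verifies a spanning tree T with f ∈ T, then f ∈ Q. In other words, it is impossible to verify a minimum spanning tree containing f without querying f. -/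
open scoped Classical

variable {V : Type*}

private lemma walk_cross {G : SimpleGraph V} (S : Set V) :
    ∀ {a b : V} (W : G.Walk a b), a ∈ S → b ∉ S →
      ∃ x y, G.Adj x y ∧ s(x, y) ∈ W.edges ∧ x ∈ S ∧ y ∉ S := by
  intro a b W
  induction W with
  | nil => intro h h'; exact absurd h h'
  | @cons x y _ h p ih =>
    intro ha hb
    by_cases hy : y ∈ S
    · obtain ⟨x', y', hxy, hmem, hs⟩ := ih hy hb
      exact ⟨x', y', hxy, List.mem_cons_of_mem _ hmem, hs⟩
    · exact ⟨x, y, h, List.mem_cons_self, ha, hy⟩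

private lemma reach_or {T : SimpleGraph V} (u₀ v₀ : V) :
    ∀ {x z : V} (_ : T.Walk x z),
      (T \ SimpleGraph.fromEdgeSet {s(u₀, v₀)}).Reachable x z ∨
      (T \ SimpleGraph.fromEdgeSet {s(u₀, v₀)}).Reachable x u₀ ∨
      (T \ SimpleGraph.fromEdgeSet {s(u₀, v₀)}).Reachable x v₀ := by
  intro x z p
  induction p with
  | nil => exact Or.inl (SimpleGraph.Reachable.refl _)
  | @cons x y _ h p ih =>
    by_cases hf : s(x, y) = s(u₀, v₀)
    · rcases Sym2.eq_iff.mp hf with ⟨rfl, rfl⟩ | ⟨rfl, rfl⟩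
      · exact Or.inr (Or.inl (SimpleGraph.Reachable.refl _))
      · exact Or.inr (Or.inr (SimpleGraph.Reachable.refl _))
    · have hadj : (T \ SimpleGraph.fromEdgeSet {s(u₀, v₀)}).Adj x y := by
        rw [SimpleGraph.sdiff_adj, SimpleGraph.fromEdgeSet_adj]
        exact ⟨h, by simp [hf]⟩
      rcases ih with h1 | h1 | h1
      · exact Or.inl (hadj.reachable.trans h1)
      · exact Or.inr (Or.inl (hadj.reachable.trans h1))
      · exact Or.inr (Or.inr (hadj.reachable.trans h1))

private lemma treeWeight_eq_sum [Fintype V] (T : SimpleGraph V) (w : Sym2 V → ℝ) :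
    treeWeight T w = ∑ e ∈ (Set.toFinite T.edgeSet).toFinset, w e := by
  rw [treeWeight, ← finsum_mem_coe_finset, Set.Finite.coe_toFinset]

/-- Let `C` be a cycle in `G` and `f` a non-trivial edge of `C` with
`U f > U e` for every other edge `e` of `C`.  If `Q` is a feasible query set verifying a
spanning tree `T` with `f ∈ T`, then `f ∈ Q`: it is impossible to verify an MST
containing `f` without querying `f`. -/
theorem stmt13 {V : Type*} [Fintype V] (G : SimpleGraph V) (A : Sym2 V → Set ℝ)
    (w : Sym2 V → ℝ)
    (hUG : IsUncertaintyGraph G A)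
    (hw : ∀ e ∈ G.edgeSet, w e ∈ A e)
    (v : V) (C : G.Walk v v) (hC : C.IsCycle)
    (f : Sym2 V) (hfC : f ∈ C.edges)
    (hfnt : ¬ ∃ x : ℝ, A f = {x})
    (hfmax : ∀ e ∈ C.edges, e ≠ f → sSup (A e) < sSup (A f))
    (T : SimpleGraph V) (hfT : f ∈ T.edgeSet)
    (Q : Set (Sym2 V)) (hQ : Verifies G A w Q T) :
    f ∈ Q := by
  by_contra hfQ
  obtain ⟨hGconn, hA⟩ := hUG
  induction f using Sym2.ind with
  | _ u₀ v₀ =>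
  have hfG : s(u₀, v₀) ∈ G.edgeSet := C.edges_subset_edgeSet hfC
  -- T is a spanning tree
  have hT : IsMST G w T := hQ w ⟨fun e _ => rfl, fun e he _ => hw e he⟩
  have hTtree : T.IsTree := hT.1.2
  have hTG : T ≤ G := hT.1.1
  have huv : T.Adj u₀ v₀ := hfT
  -- the graph T minus f
  set T' := T \ SimpleGraph.fromEdgeSet {s(u₀, v₀)} with hT'def
  have hT'T : T' ≤ T := sdiff_le
  have hnreach : ¬ T'.Reachable u₀ v₀ := by
    have hbridge : T.IsBridge s(u₀, v₀) :=
      (SimpleGraph.isAcyclic_iff_forall_edge_isBridge.mp hTtree.IsAcyclic) hfT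
    exact SimpleGraph.isBridge_iff.mp hbridge
  -- a walk in G from u₀ to v₀ along the cycle, avoiding f
  have hu₀C : u₀ ∈ C.support := C.fst_mem_support_of_mem_edges hfC
  set C' := C.rotate u₀ hu₀C with hC'def
  have hC'cyc : C'.IsCycle := hC.rotate hu₀C
  have hCedges : C'.edges ~r C.edges := C.rotate_edges u₀ hu₀C
  have hfC' : s(u₀, v₀) ∈ C'.edges := hCedges.mem_iff.mpr hfC
  have hv₀C' : v₀ ∈ C'.support := C'.snd_mem_support_of_mem_edges hfC'
  have hedges : C'.edges = (C'.takeUntil v₀ hv₀C').edges ++ (C'.dropUntil v₀ hv₀C').edges := by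
    conv_lhs => rw [← C'.take_spec hv₀C']
    rw [SimpleGraph.Walk.edges_append]
  obtain ⟨W, hWf, hWsub⟩ : ∃ W : G.Walk u₀ v₀, s(u₀, v₀) ∉ W.edges ∧
      ∀ e ∈ W.edges, e ∈ C.edges := by
    have hnodup : ((C'.takeUntil v₀ hv₀C').edges ++ (C'.dropUntil v₀ hv₀C').edges).Nodup := by
      rw [← hedges]; exact hC'cyc.isTrail.edges_nodup
    rw [List.nodup_append] at hnodup
    by_cases h1 : s(u₀, v₀) ∈ (C'.takeUntil v₀ hv₀C').edges
    · refine ⟨(C'.dropUntil v₀ hv₀C').reverse, ?_, ?_⟩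
      · rw [SimpleGraph.Walk.edges_reverse, List.mem_reverse]
        exact fun hmem => hnodup.2.2 _ h1 _ hmem rfl
      · intro e he
        rw [SimpleGraph.Walk.edges_reverse, List.mem_reverse] at he
        exact hCedges.mem_iff.mp (C'.edges_dropUntil_subset hv₀C' he)
    · exact ⟨C'.takeUntil v₀ hv₀C', h1,
        fun e he => hCedges.mem_iff.mp (C'.edges_takeUntil_subset hv₀C' he)⟩
  -- find the crossing edge e₀ = s(a,b)
  obtain ⟨a, b, hab, habW, haS, hbS⟩ :=
    walk_cross {x | T'.Reachable u₀ x} W (SimpleGraph.Reachable.refl u₀) hnreach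
  have he₀C : s(a, b) ∈ C.edges := hWsub _ habW
  have he₀f : s(a, b) ≠ s(u₀, v₀) := fun h => hWf (h ▸ habW)
  have he₀G : s(a, b) ∈ G.edgeSet := hab
  have he₀T : s(a, b) ∉ T.edgeSet := by
    intro h
    have hadj : T'.Adj a b := by
      rw [hT'def, SimpleGraph.sdiff_adj, SimpleGraph.fromEdgeSet_adj]
      exact ⟨h, by simp [he₀f]⟩
    exact hbS (haS.trans hadj.reachable)
  -- choose the modified weight
  have hsupe₀ : sSup (A s(a, b)) < sSup (A s(u₀, v₀)) := hfmax _ he₀C he₀f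
  obtain ⟨c, hcA, hc⟩ := exists_lt_of_lt_csSup (hA _ hfG).1 hsupe₀
  have hwe₀c : w s(a, b) < c :=
    lt_of_le_of_lt (le_csSup (hA _ he₀G).2.2.1 (hw _ he₀G)) hc
  set w' : Sym2 V → ℝ := fun e => if e = s(u₀, v₀) then c else w e with hw'def
  have hMST : IsMST G w' T := by
    refine hQ w' ⟨fun e heQ => ?_, fun e heG heQ => ?_⟩
    · have hne : e ≠ s(u₀, v₀) := fun h => hfQ (h ▸ heQ)
      simp [hw'def, hne]
    · by_cases he : e = s(u₀, v₀)
      · subst he; simpa [hw'def] using hcA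
      · simpa [hw'def, he] using hw e heG
  -- the exchanged tree
  set T'' := T' ⊔ SimpleGraph.fromEdgeSet {s(a, b)} with hT''def
  have hT'le : T'' ≥ T' := le_sup_left
  have habT'' : T''.Adj a b := by
    rw [hT''def, SimpleGraph.sup_adj, SimpleGraph.fromEdgeSet_adj]
    exact Or.inr ⟨rfl, hab.ne⟩
  have hreach2 : ∀ x : V, T'.Reachable x u₀ ∨ T'.Reachable x v₀ := by
    intro x
    obtain ⟨p⟩ := hTtree.isConnected x u₀
    rcases reach_or u₀ v₀ p with h | h | h
    · exact Or.inl h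
    · exact Or.inl h
    · exact Or.inr h
  have hbv₀ : T'.Reachable b v₀ := by
    rcases hreach2 b with h | h
    · exact absurd h.symm hbS
    · exact h
  have hvu'' : T''.Reachable v₀ u₀ :=
    ((hbv₀.mono hT'le).symm.trans habT''.symm.reachable).trans ((haS.mono hT'le).symm)
  have hto_u₀ : ∀ x : V, T''.Reachable x u₀ := by
    intro x
    rcases hreach2 x with h | h
    · exact h.mono hT'le
    · exact (h.mono hT'le).trans hvu''
  have hconn'' : T''.Connected := by
    rw [SimpleGraph.connected_iff]
    exact ⟨fun x y => (hto_u₀ x).trans (hto_u₀ y).symm, ⟨u₀⟩⟩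
  have hacy'' : T''.IsAcyclic := by
    intro v' cyc hcyc
    by_cases he : s(a, b) ∈ cyc.edges
    · have hnb : ¬ T''.IsBridge s(a, b) := by
        rw [SimpleGraph.isBridge_iff_forall_cycle_notMem habT'']
        push_neg
        exact ⟨v', cyc, hcyc, he⟩
      rw [SimpleGraph.isBridge_iff] at hnb
      push_neg at hnb
      have hr : (T'' \ SimpleGraph.fromEdgeSet {s(a, b)}).Reachable a b := hnb
      have hle : T'' \ SimpleGraph.fromEdgeSet {s(a, b)} ≤ T' := by
        intro x y hxy
        rw [SimpleGraph.sdiff_adj, hT''def, SimpleGraph.sup_adj] at hxy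
        tauto
      exact hbS (haS.trans (hr.mono hle))
    · have hsub : ∀ e ∈ cyc.edges, e ∈ T.edgeSet := by
        intro e hec
        have hmem := cyc.edges_subset_edgeSet hec
        rw [hT''def, SimpleGraph.edgeSet_sup, hT'def, SimpleGraph.edgeSet_sdiff,
          SimpleGraph.edgeSet_fromEdgeSet, SimpleGraph.edgeSet_fromEdgeSet] at hmem
        rcases hmem with hmem | hmem
        · exact hmem.1
        · exact absurd (hmem.1 ▸ hec) he
      exact hTtree.IsAcyclic (cyc.transfer T hsub) (hcyc.transfer hsub)
  have hT''G : T'' ≤ G := by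
    rw [hT''def]
    refine sup_le (le_trans hT'T hTG) ?_
    intro x y hxy
    rw [SimpleGraph.fromEdgeSet_adj] at hxy
    rcases Sym2.eq_iff.mp hxy.1 with ⟨rfl, rfl⟩ | ⟨rfl, rfl⟩
    · exact hab
    · exact hab.symm
  have hspan'' : IsSpanningTree G T'' := ⟨hT''G, ⟨hconn'', hacy''⟩⟩
  -- edge set identity
  have hedge'' : T''.edgeSet = insert s(a, b) (T.edgeSet \ {s(u₀, v₀)}) := by
    have hndiag : ¬ Sym2.IsDiag s(a, b) := G.not_isDiag_of_mem_edgeSet he₀G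
    ext e
    rw [hT''def, SimpleGraph.edgeSet_sup, hT'def, SimpleGraph.edgeSet_sdiff,
      SimpleGraph.edgeSet_fromEdgeSet, SimpleGraph.edgeSet_fromEdgeSet]
    simp only [Set.mem_union, Set.mem_diff, Set.mem_insert_iff, Set.mem_singleton_iff,
      Set.mem_setOf_eq]
    constructor
    · rintro (⟨heT, hne⟩ | ⟨rfl, _⟩)
      · refine Or.inr ⟨heT, fun h => hne ⟨h, T.not_isDiag_of_mem_edgeSet heT⟩⟩
      · exact Or.inl rfl
    · rintro (rfl | ⟨heT, hne⟩)
      · exact Or.inr ⟨rfl, hndiag⟩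
      · exact Or.inl ⟨heT, fun h => hne h.1⟩
  -- weight comparison
  have hwlt : treeWeight T'' w' < treeWeight T w' := by
    rw [treeWeight_eq_sum, treeWeight_eq_sum]
    have hTfin := Set.toFinite T.edgeSet
    have hT''fin := Set.toFinite T''.edgeSet
    have hfinset : hT''fin.toFinset = insert s(a, b) (hTfin.toFinset.erase s(u₀, v₀)) := by
      ext e
      simp only [Set.Finite.mem_toFinset, Finset.mem_insert, Finset.mem_erase,
        Set.Finite.mem_toFinset, hedge'', Set.mem_insert_iff, Set.mem_diff,
        Set.mem_singleton_iff]
      tauto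
    rw [hfinset, Finset.sum_insert (by
      simp only [Finset.mem_erase, Set.Finite.mem_toFinset]
      exact fun h => he₀T h.2)]
    have hfsum : ∑ e ∈ hTfin.toFinset, w' e
        = w' s(u₀, v₀) + ∑ e ∈ hTfin.toFinset.erase s(u₀, v₀), w' e := by
      rw [Finset.add_sum_erase _ w' (hTfin.mem_toFinset.mpr hfT)]
    rw [hfsum]
    have h1 : w' s(a, b) = w s(a, b) := by simp [hw'def, he₀f]
    have h2 : w' s(u₀, v₀) = c := by simp [hw'def]
    rw [h1, h2]
    exact add_lt_add_left hwe₀c _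
  exact absurd (hMST.2 T'' hspan'') (not_le.mpr hwlt)
end

section
/- Let I be a vertex-uncertainty instance whose underlying graph is a single cycle C = (V,E), with true positions p(v) ∈ A_v. Let Q ⊆ V and let (A'_v) be the vertex uncertainty sets obtained by replacing A_v with the singleton {p(v)} for every v ∈ Q. If there exists an edge f of C that is always maximal in C with respect to the associated edge instance built from the sets (A'_v) — that is, inf A'_f ≥ sup A'_e for all edges e of C − f, where A'_{{u,v}} = {‖u' − v'‖ : u' ∈ A'_u, v' ∈ A'_v} — then Q is a feasible vertex query set for I, and it verifies the spanning tree C − f. -/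
open scoped Classical

variable {V : Type*}

/-- Points of the Euclidean plane. -/
noncomputable abbrev Pt : Type := EuclideanSpace ℝ (Fin 2)

/-- The edge weights induced by a position assignment: the weight of an edge is the
Euclidean distance between the positions of its endpoints. -/
noncomputable def edgeDist (p : V → Pt) : Sym2 V → ℝ :=
  Sym2.lift ⟨fun u v => dist (p u) (p v), fun u v => dist_comm (p u) (p v)⟩

/-- The edge uncertainty sets of the associated edge instance:
`A {u,v} = {‖u' − v'‖ : u' ∈ A u, v' ∈ A v}`. -/
noncomputable def assocSet (A : V → Set Pt) : Sym2 V → Set ℝ :=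
  Sym2.lift ⟨fun u v => {d : ℝ | ∃ u' ∈ A u, ∃ v' ∈ A v, d = dist u' v'}, by
    intro u v
    ext d
    constructor
    · rintro ⟨u', hu, v', hv, rfl⟩
      exact ⟨v', hv, u', hu, dist_comm u' v'⟩
    · rintro ⟨v', hv, u', hu, rfl⟩
      exact ⟨u', hu, v', hv, dist_comm v' u'⟩⟩

/-- A vertex is non-trivial if its uncertainty set is not a singleton. -/
def NonTrivialV (A : V → Set Pt) (v : V) : Prop := ¬ ∃ x : Pt, A v = {x}

/-- A vertex-uncertainty instance: a connected graph, true positions inside the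
uncertainty sets, and each uncertainty set either a singleton or a nonempty
bounded open set. -/
def IsVertexUncertaintyInstance (G : SimpleGraph V) (A : V → Set Pt) (p : V → Pt) : Prop :=
  G.Connected ∧ (∀ v, p v ∈ A v) ∧
    ∀ v, (∃ x : Pt, A v = {x}) ∨
      ((A v).Nonempty ∧ Bornology.IsBounded (A v) ∧ IsOpen (A v))

/-- Position assignments compatible with the query set `Q`. -/
def AdmissibleP (A : V → Set Pt) (p : V → Pt) (Q : Set V) (p' : V → Pt) : Prop :=
  (∀ v ∈ Q, p' v = p v) ∧ ∀ v ∉ Q, p' v ∈ A v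

/-- `Q` verifies the spanning tree `T`. -/
def VerifiesV (G : SimpleGraph V) (A : V → Set Pt) (p : V → Pt)
    (Q : Set V) (T : SimpleGraph V) : Prop :=
  ∀ p' : V → Pt, AdmissibleP A p Q p' → IsMST G (edgeDist p') T

/-- A feasible vertex query set. -/
def FeasibleVQuery (G : SimpleGraph V) (A : V → Set Pt) (p : V → Pt) (Q : Set V) : Prop :=
  ∃ T : SimpleGraph V, VerifiesV G A p Q T

section StmtAux

open SimpleGraph

variable {V : Type*}

lemma aux_mem_assocSet {A' : V → Set Pt} {p' : V → Pt}
    (hp' : ∀ v, p' v ∈ A' v) (e : Sym2 V) : edgeDist p' e ∈ assocSet A' e := by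
  induction e using Sym2.ind with
  | _ a b =>
    simp only [edgeDist, assocSet, Sym2.lift_mk, Set.mem_setOf_eq]
    exact ⟨p' a, hp' a, p' b, hp' b, rfl⟩

lemma aux_bddAbove_assocSet {A' : V → Set Pt} (hb : ∀ v, Bornology.IsBounded (A' v))
    (e : Sym2 V) : BddAbove (assocSet A' e) := by
  induction e using Sym2.ind with
  | _ a b =>
    obtain ⟨C, hC⟩ := Metric.isBounded_iff.1 ((hb a).union (hb b))
    refine ⟨C, fun d hd => ?_⟩
    simp only [assocSet, Sym2.lift_mk, Set.mem_setOf_eq] at hd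
    obtain ⟨u', hu, v', hv, rfl⟩ := hd
    exact hC (Set.mem_union_left _ hu) (Set.mem_union_right _ hv)

lemma aux_bddBelow_assocSet (A' : V → Set Pt) (e : Sym2 V) : BddBelow (assocSet A' e) := by
  induction e using Sym2.ind with
  | _ a b =>
    refine ⟨0, fun d hd => ?_⟩
    simp only [assocSet, Sym2.lift_mk, Set.mem_setOf_eq] at hd
    obtain ⟨u', _, v', _, rfl⟩ := hd
    exact dist_nonneg

lemma aux_treeWeight_eq [Fintype V] (H : SimpleGraph V) (w : Sym2 V → ℝ) :
    treeWeight H w = ∑ e ∈ H.edgeFinset, w e := by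
  rw [treeWeight, ← SimpleGraph.coe_edgeFinset, finsum_mem_coe_finset]

lemma aux_deg2 {G : SimpleGraph V} {v : V} {c : G.Walk v v}
    (hc : c.IsCycle)
    {u y₁ y₂ y₃ : V} (h12 : y₁ ≠ y₂) (h13 : y₁ ≠ y₃) (h23 : y₂ ≠ y₃)
    (e1 : s(u, y₁) ∈ c.edges) (e2 : s(u, y₂) ∈ c.edges) (e3 : s(u, y₃) ∈ c.edges) :
    False := by
  classical
  have htrail : c.IsTrail := hc.isCircuit.isTrail
  have hdnd : c.darts.Nodup := by
    have h := htrail.edges_nodup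
    rw [Walk.edges] at h
    exact h.of_map _
  have htail : c.support.tail.Nodup := ((Walk.isCycle_def c).1 hc).2.2
  -- support.dropLast is Nodup
  have hsplit : c.support.dropLast ++ [v] = c.support := by
    have h := List.dropLast_append_getLast (l := c.support) (by simp)
    rwa [c.getLast_support] at h
  have hdl : c.support.dropLast.Nodup := by
    rw [List.nodup_iff_count_le_one]
    intro a
    have h1 : (c.support.dropLast ++ [v]).count a = c.support.count a := by rw [hsplit]
    have h2 : c.support.count a = ([v] ++ c.support.tail).count a := by
      rw [List.singleton_append, ← c.support_eq_cons]
    have h3 : c.support.tail.count a ≤ 1 := List.nodup_iff_count_le_one.1 htail a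
    rw [List.count_append] at h1 h2
    omega
  have hinjF : ∀ d₁ ∈ c.darts, ∀ d₂ ∈ c.darts, d₁.fst = d₂.fst → d₁ = d₂ := by
    have hmap : (c.darts.map fun d => d.fst).Nodup := by
      rw [Walk.map_fst_darts]; exact hdl
    exact fun d₁ h₁ d₂ h₂ h => List.inj_on_of_nodup_map hmap h₁ h₂ h
  have hinjS : ∀ d₁ ∈ c.darts, ∀ d₂ ∈ c.darts, d₁.snd = d₂.snd → d₁ = d₂ := by
    have hmap : (c.darts.map fun d => d.snd).Nodup := by
      rw [Walk.map_snd_darts]; exact htail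
    exact fun d₁ h₁ d₂ h₂ h => List.inj_on_of_nodup_map hmap h₁ h₂ h
  have hdart : ∀ {y : V}, s(u, y) ∈ c.edges →
      ∃ d ∈ c.darts, (d.fst = u ∧ d.snd = y) ∨ (d.fst = y ∧ d.snd = u) := by
    intro y hy
    rw [Walk.edges, List.mem_map] at hy
    obtain ⟨d, hd, hq⟩ := hy
    refine ⟨d, hd, ?_⟩
    have h : s(d.fst, d.snd) = s(u, y) := by rw [← hq]; rfl
    rw [Sym2.eq_iff] at h
    tauto
  obtain ⟨d₁, hd₁, ho₁⟩ := hdart e1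
  obtain ⟨d₂, hd₂, ho₂⟩ := hdart e2
  obtain ⟨d₃, hd₃, ho₃⟩ := hdart e3
  have keyF : ∀ {d e : G.Dart} {ya yb : V}, d ∈ c.darts → e ∈ c.darts → ya ≠ yb →
      d.fst = u ∧ d.snd = ya → e.fst = u ∧ e.snd = yb → False := by
    rintro d e ya yb hd he hne ⟨hdf, hds⟩ ⟨hef, hes⟩
    exact hne (by rw [← hds, ← hes, hinjF d hd e he (hdf.trans hef.symm)])
  have keyS : ∀ {d e : G.Dart} {ya yb : V}, d ∈ c.darts → e ∈ c.darts → ya ≠ yb →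
      d.fst = ya ∧ d.snd = u → e.fst = yb ∧ e.snd = u → False := by
    rintro d e ya yb hd he hne ⟨hdf, hds⟩ ⟨hef, hes⟩
    exact hne (by rw [← hdf, ← hef, hinjS d hd e he (hds.trans hes.symm)])
  rcases ho₁ with h₁ | h₁ <;> rcases ho₂ with h₂ | h₂ <;> rcases ho₃ with h₃ | h₃
  · exact keyF hd₁ hd₂ h12 h₁ h₂
  · exact keyF hd₁ hd₂ h12 h₁ h₂
  · exact keyF hd₁ hd₃ h13 h₁ h₃
  · exact keyS hd₂ hd₃ h23 h₂ h₃
  · exact keyF hd₂ hd₃ h23 h₂ h₃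
  · exact keyS hd₁ hd₃ h13 h₁ h₃
  · exact keyS hd₁ hd₂ h12 h₁ h₂
  · exact keyS hd₁ hd₂ h12 h₁ h₂

lemma aux_two_incident {G : SimpleGraph V} {a : V} {q : G.Walk a a} (hq : q.IsCycle)
    {w : V} (hw : w ∈ q.support) :
    ∃ y z : V, y ≠ z ∧ s(w, y) ∈ q.edges ∧ s(w, z) ∈ q.edges := by
  have hrot : (q.rotate w hw).IsCycle := hq.rotate hw
  have hmemiff : ∀ e : Sym2 V, e ∈ (q.rotate w hw).edges ↔ e ∈ q.edges :=
    fun e => (Walk.rotate_edges q w hw).mem_iff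
  obtain ⟨b, hadj, r, heq⟩ := Walk.not_nil_iff.1 hrot.not_nil
  rw [heq] at hrot hmemiff
  obtain ⟨hpath, hne⟩ := (Walk.cons_isCycle_iff r hadj).1 hrot
  have hbw : b ≠ w := hadj.ne'
  have hrevnil : ¬ r.reverse.Nil := Walk.not_nil_of_ne (fun h => hbw h.symm)
  obtain ⟨z, hadj2, r2, heq2⟩ := Walk.not_nil_iff.1 hrevnil
  have hzr : s(w, z) ∈ r.edges := by
    have h : s(w, z) ∈ r.reverse.edges := by rw [heq2]; simp
    rwa [Walk.edges_reverse, List.mem_reverse] at h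
  have hzb : b ≠ z := by rintro rfl; exact hne hzr
  refine ⟨b, z, hzb, ?_, ?_⟩
  · exact (hmemiff _).1 (by simp)
  · exact (hmemiff _).1 (by rw [Walk.edges_cons]; exact List.mem_cons_of_mem _ hzr)

lemma aux_reach_del {G : SimpleGraph V} {x y : V}
    (hxy : (G.deleteEdges {s(x, y)}).Reachable x y) :
    ∀ {a b : V}, G.Walk a b → (G.deleteEdges {s(x, y)}).Reachable a b := by
  intro a b wk
  induction wk with
  | nil => exact Reachable.refl _
  | @cons a' b' c' h q ih =>
    refine Reachable.trans ?_ ih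
    by_cases he : s(a', b') = s(x, y)
    · rw [Sym2.eq_iff] at he
      rcases he with ⟨rfl, rfl⟩ | ⟨rfl, rfl⟩
      · exact hxy
      · exact hxy.symm
    · exact (SimpleGraph.deleteEdges_adj.2 ⟨h, by simpa using he⟩).reachable

end StmtAux

section MainProof
open SimpleGraph SimpleGraph.Walk

/-- Let the underlying graph of a vertex-uncertainty instance be a
single cycle `C`, let `Q ⊆ V`, and let `A'` be obtained from `A` by replacing `A v` by
`{p v}` for every `v ∈ Q`.  If some edge `f` of `C` is always maximal in `C` with
respect to the associated edge instance built from `(A' v)`, then `Q` is a feasible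
vertex query set and it verifies the spanning tree `C − f`. -/
theorem stmt14 {V : Type*} [Fintype V] (G : SimpleGraph V)
    (A : V → Set Pt) (p : V → Pt)
    (hI : IsVertexUncertaintyInstance G A p)
    (hcyc : IsCycleGraph G)
    (Q : Set V)
    (A' : V → Set Pt) (hA' : A' = fun v => if v ∈ Q then {p v} else A v)
    (f : Sym2 V) (hfG : f ∈ G.edgeSet)
    (hmax : ∀ e ∈ G.edgeSet, e ≠ f → sSup (assocSet A' e) ≤ sInf (assocSet A' f)) :
    FeasibleVQuery G A p Q ∧ VerifiesV G A p Q (G.deleteEdges {f}) := by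
  classical
  obtain ⟨hconn, hpA, hAty⟩ := hI
  obtain ⟨v, c, hc, hall, hE⟩ := hcyc
  haveI : Nonempty V := ⟨v⟩
  revert hfG hmax
  induction f using Sym2.ind with
  | _ x y =>
  intro hfG hmax
  have hfc : s(x, y) ∈ c.edges := (hE _).1 hfG
  -- A' facts
  have hA'mem : ∀ u, p u ∈ A' u := by
    intro u
    by_cases h : u ∈ Q <;> simp [hA', h, hpA u]
  have hA'bdd : ∀ u, Bornology.IsBounded (A' u) := by
    intro u
    by_cases h : u ∈ Q
    · simp only [hA', h, if_true]
      exact Bornology.isBounded_singleton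
    · simp only [hA', h, if_false]
      rcases hAty u with ⟨xx, hx⟩ | ⟨_, hb, _⟩
      · rw [hx]; exact Bornology.isBounded_singleton
      · exact hb
  -- the tree T
  set T : SimpleGraph V := G.deleteEdges {s(x, y)} with hT
  have hTle : T ≤ G := SimpleGraph.deleteEdges_le _
  -- T connected
  have hnb : ¬ G.IsBridge s(x, y) := fun hb =>
    (SimpleGraph.isBridge_iff_forall_cycle_notMem hfG).1 hb c hc hfc
  have hxadj : G.Adj x y := hfG
  have hxyreach : T.Reachable x y := by
    by_contra hr
    exact hnb (SimpleGraph.isBridge_iff.2 hr)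
  have hTconn : T.Connected := by
    refine SimpleGraph.Connected.mk (fun a b => ?_)
    exact aux_reach_del hxyreach ((hconn a b).some)
  -- T acyclic
  have hTacyc : T.IsAcyclic := by
    intro u q hq
    have hqsub : ∀ e ∈ q.edges, e ∈ G.edgeSet ∧ e ≠ s(x, y) := by
      intro e he
      have h := q.edges_subset_edgeSet he
      rw [hT, SimpleGraph.edgeSet_deleteEdges] at h
      exact ⟨h.1, by simpa using h.2⟩
    have hqsub' : ∀ e ∈ q.edges, e ∈ G.edgeSet := fun e he => (hqsub e he).1
    set q' : G.Walk u u := q.transfer G hqsub' with hq'def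
    have hq'edges : q'.edges = q.edges := Walk.edges_transfer q hqsub'
    have hq'supp : q'.support = q.support := Walk.support_transfer q hqsub'
    have hq'cyc : q'.IsCycle := hq.transfer hqsub'
    by_cases hx : x ∈ q'.support
    · obtain ⟨y₁, y₂, h12, he1, he2⟩ := aux_two_incident hq'cyc hx
      have hy1 : y₁ ≠ y := by
        rintro rfl
        exact (hqsub _ (hq'edges ▸ he1)).2 rfl
      have hy2 : y₂ ≠ y := by
        rintro rfl
        exact (hqsub _ (hq'edges ▸ he2)).2 rfl
      exact aux_deg2 hc h12 hy1 hy2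
        ((hE _).1 (q'.edges_subset_edgeSet he1))
        ((hE _).1 (q'.edges_subset_edgeSet he2)) hfc
    · have hu : u ∈ q'.support := Walk.start_mem_support _
      obtain ⟨d, hd, hdS, hdnS⟩ :=
        ((hconn u x).some).exists_boundary_dart {t | t ∈ q'.support} hu hx
      obtain ⟨y₁, y₂, h12, he1, he2⟩ := aux_two_incident hq'cyc hdS
      have hz1 : y₁ ≠ d.snd := by
        rintro rfl
        exact hdnS (q'.snd_mem_support_of_mem_edges he1)
      have hz2 : y₂ ≠ d.snd := by
        rintro rfl
        exact hdnS (q'.snd_mem_support_of_mem_edges he2)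
      have hedge : s(d.fst, d.snd) ∈ c.edges := (hE _).1 d.adj
      exact aux_deg2 hc h12 hz1 hz2
        ((hE _).1 (q'.edges_subset_edgeSet he1))
        ((hE _).1 (q'.edges_subset_edgeSet he2)) hedge
  have hTtree : IsSpanningTree G T := ⟨hTle, hTconn, hTacyc⟩
  -- edge counts
  have hvtail : ∀ u : V, u ∈ c.support.tail := by
    obtain ⟨b, hadj, r, heq⟩ := Walk.not_nil_iff.1 hc.not_nil
    intro u
    have hu := hall u
    rw [c.support_eq_cons] at hu
    rcases List.mem_cons.1 hu with rfl | h
    · have : c.support.tail = r.support := by rw [heq]; simp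
      rw [this]
      exact Walk.end_mem_support r
    · exact h
  have htail : c.support.tail.Nodup := ((Walk.isCycle_def c).1 hc).2.2
  have hGcard : G.edgeFinset.card = Fintype.card V := by
    have hGfin : G.edgeFinset = c.edges.toFinset := by
      ext e
      simp [SimpleGraph.mem_edgeFinset, hE e, List.mem_toFinset]
    have htfin : c.support.tail.toFinset = Finset.univ := by
      ext u; simp [hvtail u]
    have hlen : c.support.tail.length = Fintype.card V := by
      rw [← List.toFinset_card_of_nodup htail, htfin, Finset.card_univ]
    have hlen2 : c.edges.length = c.support.tail.length := by
      have h1 := c.length_support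
      have h2 := c.length_edges
      have h3 : c.support.tail.length = c.support.length - 1 := by
        simp [List.length_tail]
      omega
    rw [hGfin, List.toFinset_card_of_nodup hc.isCircuit.isTrail.edges_nodup, hlen2, hlen]
  have hTfin : T.edgeFinset = G.edgeFinset.erase s(x, y) := by
    ext e
    simp only [SimpleGraph.mem_edgeFinset, Finset.mem_erase, hT,
      SimpleGraph.edgeSet_deleteEdges, Set.mem_diff, Set.mem_singleton_iff]
    tauto
  -- main verification
  have hver : VerifiesV G A p Q T := by
    intro p' hp'
    have hp'A : ∀ u, p' u ∈ A' u := by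
      intro u
      by_cases h : u ∈ Q
      · simp [hA', h, hp'.1 u h]
      · simp [hA', h, hp'.2 u h]
    set ww : Sym2 V → ℝ := edgeDist p' with hww
    have hwe : ∀ e ∈ G.edgeSet, ww e ≤ ww s(x, y) := by
      intro e he
      by_cases hef : e = s(x, y)
      · rw [hef]
      · calc ww e ≤ sSup (assocSet A' e) :=
              le_csSup (aux_bddAbove_assocSet hA'bdd e) (aux_mem_assocSet hp'A e)
          _ ≤ sInf (assocSet A' s(x, y)) := hmax e he hef
          _ ≤ ww s(x, y) :=
              csInf_le (aux_bddBelow_assocSet A' _) (aux_mem_assocSet hp'A _)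
    refine ⟨hTtree, ?_⟩
    intro T' hT'
    have hT'card : T'.edgeFinset.card + 1 = Fintype.card V := hT'.2.card_edgeFinset
    have hsub : T'.edgeFinset ⊆ G.edgeFinset :=
      SimpleGraph.edgeFinset_subset_edgeFinset.2 hT'.1
    have hne' : (G.edgeFinset \ T'.edgeFinset).Nonempty := by
      rw [Finset.sdiff_nonempty]
      intro hsub2
      have : T'.edgeFinset = G.edgeFinset := Finset.Subset.antisymm hsub hsub2
      rw [this, hGcard] at hT'card
      omega
    obtain ⟨e, he⟩ := hne'
    rw [Finset.mem_sdiff] at he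
    have hsub3 : T'.edgeFinset ⊆ G.edgeFinset.erase e := by
      intro a ha
      exact Finset.mem_erase.2 ⟨fun h => he.2 (h ▸ ha), hsub ha⟩
    have hT'eq : T'.edgeFinset = G.edgeFinset.erase e := by
      refine Finset.eq_of_subset_of_card_le hsub3 ?_
      rw [Finset.card_erase_of_mem he.1, hGcard]
      omega
    rw [treeWeight, treeWeight, ← SimpleGraph.coe_edgeFinset, ← SimpleGraph.coe_edgeFinset,
      finsum_mem_coe_finset, finsum_mem_coe_finset, hTfin, hT'eq]
    have hsum1 : (∑ a ∈ G.edgeFinset.erase s(x, y), ww a) + ww s(x, y)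
        = ∑ a ∈ G.edgeFinset, ww a := Finset.sum_erase_add _ _ (by simpa using hfG)
    have hsum2 : (∑ a ∈ G.edgeFinset.erase e, ww a) + ww e
        = ∑ a ∈ G.edgeFinset, ww a := Finset.sum_erase_add _ _ he.1
    have hwef : ww e ≤ ww s(x, y) := hwe e (SimpleGraph.mem_edgeFinset.1 he.1)
    linarith
  exact ⟨⟨T, hver⟩, hver⟩

end MainProof
end
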